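/- arXiv:1008.3163 — 9 statements merged into one kernel-verified Lean document; each statement's English description precedes it below -/
import Mathlib

section
/- No finite tree with at least two vertices is irreducibly odd; i.e., every irreducibly odd graph (on at least two vertices) contains a cycle. -/
/-- A graph is irreducibly odd if every vertex has odd degree and for every pair
of distinct vertices `u, v` there is a third vertex adjacent to exactly one of them. -/
def IrredOdd {V : Type*} (G : SimpleGraph V) : Prop :=
  (∀ v : V, Odd (G.neighborSet v).ncard) ∧
  ∀ u v : V, u ≠ v → ∃ w : V, w ≠ u ∧ w ≠ v ∧ Xor' (G.Adj w u) (G.Adj w v)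

section Aux

open SimpleGraph

variable {V : Type*} {G : SimpleGraph V}

private lemma tree_path_length (hT : G.IsTree) {r v : V} (p : G.Walk r v) (hp : p.IsPath) :
    p.length = G.dist r v := by
  classical
  refine le_antisymm ?_ (SimpleGraph.dist_le p)
  obtain ⟨q, hq⟩ := hT.isConnected.exists_walk_length_eq_dist r v
  have huniq := hT.IsAcyclic.path_unique ⟨p, hp⟩ ⟨q.bypass, q.bypass_isPath⟩
  have hpq : p = q.bypass := congrArg Subtype.val huniq
  calc p.length = q.bypass.length := by rw [hpq]
    _ ≤ q.length := q.length_bypass_le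
    _ = G.dist r v := hq

private lemma isPath_concat' {u v w : V} {p : G.Walk u v} (hp : p.IsPath) (h : G.Adj v w)
    (hw : w ∉ p.support) : (p.concat h).IsPath := by
  rw [SimpleGraph.Walk.isPath_def, SimpleGraph.Walk.support_concat,
    List.nodup_append]
  refine ⟨hp.support_nodup, List.nodup_singleton w, ?_⟩
  intro a ha b hb
  rw [List.mem_singleton] at hb
  subst hb; rintro rfl; exact hw ha

private lemma adj_dist (hT : G.IsTree) (r : V) {a b : V} (hab : G.Adj a b) :
    G.dist r b = G.dist r a + 1 ∨ G.dist r a = G.dist r b + 1 := by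
  classical
  obtain ⟨q, hq⟩ := hT.isConnected.exists_walk_length_eq_dist r a
  set p := q.bypass with hpdef
  have hp : p.IsPath := q.bypass_isPath
  have hpl : p.length = G.dist r a := tree_path_length hT p hp
  by_cases hb : b ∈ p.support
  · right
    have htp : (p.takeUntil b hb).IsPath := hp.takeUntil hb
    have h1 : (p.takeUntil b hb).length = G.dist r b := tree_path_length hT _ htp
    have h2 : (p.takeUntil b hb).length + (p.dropUntil b hb).length = p.length := by
      have := congrArg SimpleGraph.Walk.length (p.take_spec hb)
      rwa [SimpleGraph.Walk.length_append] at this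
    have hba : G.dist b a = 1 := by
      rw [SimpleGraph.dist_eq_one_iff_adj]; exact hab.symm
    have h3 : 1 ≤ (p.dropUntil b hb).length := by
      have := SimpleGraph.dist_le (p.dropUntil b hb)
      omega
    have htri : G.dist r a ≤ G.dist r b + G.dist b a := hT.isConnected.dist_triangle
    omega
  · left
    have hc : (p.concat hab).IsPath := isPath_concat' hp hab hb
    have := tree_path_length hT (p.concat hab) hc
    rw [SimpleGraph.Walk.length_concat, hpl] at this
    omega

private lemma down_unique (hT : G.IsTree) (r : V) {a w1 w2 : V} (h1 : G.Adj a w1) (h2 : G.Adj a w2)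
    (d1 : G.dist r w1 + 1 = G.dist r a) (d2 : G.dist r w2 + 1 = G.dist r a) : w1 = w2 := by
  classical
  obtain ⟨q1, hq1⟩ := hT.isConnected.exists_walk_length_eq_dist r w1
  obtain ⟨q2, hq2⟩ := hT.isConnected.exists_walk_length_eq_dist r w2
  set p1 := q1.bypass with hp1def
  set p2 := q2.bypass with hp2def
  have hp1 : p1.IsPath := q1.bypass_isPath
  have hp2 : p2.IsPath := q2.bypass_isPath
  have l1 : p1.length = G.dist r w1 := tree_path_length hT p1 hp1
  have l2 : p2.length = G.dist r w2 := tree_path_length hT p2 hp2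
  have ha1 : a ∉ p1.support := by
    intro hmem
    have e1 : (p1.takeUntil a hmem).length = G.dist r a :=
      tree_path_length hT _ (hp1.takeUntil hmem)
    have e2 := SimpleGraph.Walk.length_takeUntil_le p1 hmem
    omega
  have ha2 : a ∉ p2.support := by
    intro hmem
    have e1 : (p2.takeUntil a hmem).length = G.dist r a :=
      tree_path_length hT _ (hp2.takeUntil hmem)
    have e2 := SimpleGraph.Walk.length_takeUntil_le p2 hmem
    omega
  have huniq := hT.IsAcyclic.path_unique
    ⟨p1.concat h1.symm, isPath_concat' hp1 h1.symm ha1⟩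
    ⟨p2.concat h2.symm, isPath_concat' hp2 h2.symm ha2⟩
  have heq : p1.concat h1.symm = p2.concat h2.symm := congrArg Subtype.val huniq
  obtain ⟨hv, -⟩ := SimpleGraph.Walk.concat_inj heq
  exact hv

end Aux

/-- No finite tree with at least two vertices is irreducibly odd. -/
theorem no_tree_irredOdd {V : Type*} [Fintype V] (G : SimpleGraph V)
    (hT : G.IsTree) (hn : 2 ≤ Fintype.card V) : ¬ IrredOdd G := by
  classical
  rintro ⟨hodd, hpair⟩
  obtain ⟨r⟩ : Nonempty V := Fintype.card_pos_iff.mp (by omega)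
  obtain ⟨u, -, hu⟩ := Finset.exists_max_image Finset.univ (G.dist r) ⟨r, Finset.mem_univ r⟩
  have hu' : ∀ b : V, G.dist r b ≤ G.dist r u := fun b => hu b (Finset.mem_univ b)
  set D := G.dist r u with hD
  -- D ≥ 1
  obtain ⟨v, hv⟩ := Fintype.exists_ne_of_one_lt_card (by omega) r
  have hvpos : 0 < G.dist r v := by
    have : G.dist r v ≠ 0 :=
      fun h => hv ((hT.isConnected.dist_eq_zero_iff.mp h).symm)
    omega
  have hD1 : 1 ≤ D := le_trans hvpos (hu' v)
  -- every vertex has a neighbor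
  have neigh_nonempty : ∀ x : V, (G.neighborSet x).Nonempty := by
    intro x
    apply Set.nonempty_of_ncard_ne_zero
    exact (hodd x).pos.ne'
  -- every vertex at maximal distance is a leaf
  have leaf : ∀ x : V, G.dist r x = D → ∃ p : V, G.neighborSet x = {p} := by
    intro x hx
    obtain ⟨p, hp⟩ := neigh_nonempty x
    rw [SimpleGraph.mem_neighborSet] at hp
    have hpd : G.dist r x = G.dist r p + 1 := by
      rcases adj_dist hT r hp with h | h
      · have := hu' p; omega
      · exact h
    refine ⟨p, Set.eq_singleton_iff_unique_mem.mpr ⟨hp, ?_⟩⟩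
    intro y hy
    rw [SimpleGraph.mem_neighborSet] at hy
    rcases adj_dist hT r hy with h | h
    · have := hu' y; omega
    · exact down_unique hT r hy hp (by omega) (by omega)
  obtain ⟨p, hNu⟩ := leaf u rfl
  have hup : G.Adj u p := by
    have : p ∈ G.neighborSet u := by rw [hNu]; exact rfl
    exact this
  have hpd : G.dist r p + 1 = D := by
    rcases adj_dist hT r hup with h | h
    · have := hu' p; omega
    · omega
  by_cases hS : ∃ x y : V, x ≠ y ∧ G.Adj p x ∧ G.Adj p y ∧ G.dist r x = D ∧ G.dist r y = D
  · obtain ⟨x, y, hxy, hpx, hpy, hdx, hdy⟩ := hS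
    obtain ⟨px, hNx⟩ := leaf x hdx
    obtain ⟨py, hNy⟩ := leaf y hdy
    have hpx' : px = p := by
      have : p ∈ G.neighborSet x := hpx.symm
      rw [hNx] at this; exact this.symm
    have hpy' : py = p := by
      have : p ∈ G.neighborSet y := hpy.symm
      rw [hNy] at this; exact this.symm
    rw [hpx'] at hNx
    rw [hpy'] at hNy
    obtain ⟨w, hwx, hwy, hxor⟩ := hpair x y hxy
    have hwx' : G.Adj w x → w = p := by
      intro h
      have : w ∈ G.neighborSet x := h.symm
      rw [hNx] at this; exact this
    have hwy' : G.Adj w y → w = p := by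
      intro h
      have : w ∈ G.neighborSet y := h.symm
      rw [hNy] at this; exact this
    rcases hxor with ⟨h1, h2⟩ | ⟨h1, h2⟩
    · exact h2 (by rw [hwx' h1]; exact hpy)
    · exact h2 (by rw [hwy' h1]; exact hpx)
  · -- N(p) = {u}
    have key : ∀ w : V, G.Adj p w → w = u := by
      intro w hw
      by_contra hwu
      have hdown : ∀ z : V, G.Adj p z → z ≠ u → G.dist r z + 1 = G.dist r p := by
        intro z hz hzu
        rcases adj_dist hT r hz with h | h
        · exfalso
          exact hS ⟨z, u, hzu, hz, hup.symm, by omega, rfl⟩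
        · omega
      have hset : G.neighborSet p = {u, w} := by
        ext z
        simp only [SimpleGraph.mem_neighborSet, Set.mem_insert_iff, Set.mem_singleton_iff]
        constructor
        · intro hz
          by_cases hzu : z = u
          · exact Or.inl hzu
          · exact Or.inr (down_unique hT r hz hw (by
              have := hdown z hz hzu; omega) (by
              have := hdown w hw hwu; omega))
        · rintro (rfl | rfl)
          · exact hup.symm
          · exact hw
      have h2 : (G.neighborSet p).ncard = 2 := by
        rw [hset]
        exact Set.ncard_pair (fun h => hwu h.symm)
      have := hodd p
      rw [h2] at this
      exact (by decide : ¬ Odd 2) this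
    have hNp : G.neighborSet p = {u} := by
      refine Set.eq_singleton_iff_unique_mem.mpr ⟨hup.symm, ?_⟩
      intro y hy
      exact key y hy
    obtain ⟨w, hwu, hwp, hxor⟩ := hpair u p hup.ne
    have hAu : ¬ G.Adj w u := by
      intro h
      have : w ∈ G.neighborSet u := h.symm
      rw [hNu] at this
      exact hwp this
    have hAp : ¬ G.Adj w p := by
      intro h
      have : w ∈ G.neighborSet p := h.symm
      rw [hNp] at this
      exact hwu this
    rcases hxor with ⟨h1, -⟩ | ⟨h1, -⟩
    · exact hAu h1
    · exact hAp h1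
end

section
/- In a finite tree with at least 4 vertices in which every vertex has odd degree, some vertex is adjacent to at least two leaves. -/
open Finset

private lemma walk_closed {V : Type*} (G : SimpleGraph V) (s : Set V)
    (hs : ∀ a ∈ s, ∀ b, G.Adj a b → b ∈ s) :
    ∀ {x u : V}, G.Walk x u → x ∈ s → u ∈ s := by
  intro x u p
  induction p with
  | nil => exact id
  | cons h p ih => intro hx; exact ih (hs _ hx _ h)

/-- In a finite tree with at least 4 vertices in which every vertex
has odd degree, some vertex is adjacent to at least two leaves. -/
theorem odd_tree_two_leaves {V : Type*} [Fintype V] (G : SimpleGraph V)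
    [DecidableRel G.Adj] (hT : G.IsTree) (hn : 4 ≤ Fintype.card V)
    (hodd : ∀ v : V, Odd (G.degree v)) :
    ∃ v a b : V, a ≠ b ∧ G.Adj v a ∧ G.Adj v b ∧ G.degree a = 1 ∧ G.degree b = 1 := by
  classical
  by_contra hcon
  push_neg at hcon
  haveI : Nonempty V := Fintype.card_pos_iff.mp (by omega)
  -- leaf set
  set Lset : Finset V := Finset.univ.filter (fun v => G.degree v = 1) with hLdef
  set Mset : Finset V := Finset.univ.filter (fun v => ¬ G.degree v = 1) with hMdef
  have hsplitcard : Lset.card + Mset.card = Fintype.card V := by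
    simpa using Finset.card_filter_add_card_filter_not
      (s := Finset.univ) (p := fun v => G.degree v = 1)
  -- sum of degrees
  have hsum : ∑ v, G.degree v = 2 * (Fintype.card V - 1) := by
    rw [G.sum_degrees_eq_twice_card_edges]
    have := hT.card_edgeFinset
    omega
  have hLsum : ∑ v ∈ Lset, G.degree v = Lset.card := by
    rw [Finset.sum_congr rfl (fun v hv => (Finset.mem_filter.mp hv).2)]
    simp
    rfl
  have hMsum : 3 * Mset.card ≤ ∑ v ∈ Mset, G.degree v := by
    rw [mul_comm 3 Mset.card, ← smul_eq_mul]
    refine Finset.card_nsmul_le_sum _ _ _ ?_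
    intro v hv
    have h1 := (Finset.mem_filter.mp hv).2
    obtain ⟨k, hk⟩ := hodd v
    omega
  have hsplit : ∑ v ∈ Lset, G.degree v + ∑ v ∈ Mset, G.degree v = ∑ v, G.degree v :=
    Finset.sum_filter_add_sum_filter_not _ _ _
  have hLlarge : Fintype.card V + 2 ≤ 2 * Lset.card := by omega
  -- unique neighbor function for leaves
  have hex : ∀ v : V, G.degree v = 1 → ∃ w, G.neighborFinset v = {w} := by
    intro v hv
    exact Finset.card_eq_one.mp hv
  set f : V → V := fun v =>
    if h : G.degree v = 1 then (hex v h).choose else Classical.arbitrary V with hfdef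
  have hf : ∀ v, G.degree v = 1 → G.neighborFinset v = {f v} := by
    intro v hv
    simp only [hfdef, dif_pos hv]
    exact (hex v hv).choose_spec
  have hadj : ∀ v, G.degree v = 1 → G.Adj v (f v) := by
    intro v hv
    rw [← SimpleGraph.mem_neighborFinset, hf v hv]
    exact Finset.mem_singleton_self _
  -- f maps leaves to non-leaves
  have hmaps : ∀ v ∈ Lset, f v ∈ Mset := by
    intro v hv
    have hv1 := (Finset.mem_filter.mp hv).2
    refine Finset.mem_filter.mpr ⟨Finset.mem_univ _, ?_⟩
    intro hfv1
    -- then {v, f v} is closed under adjacency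
    have hclosed : ∀ a ∈ ({v, f v} : Set V), ∀ b, G.Adj a b → b ∈ ({v, f v} : Set V) := by
      rintro a (rfl | ha) b hab
      · have : b ∈ G.neighborFinset a := (SimpleGraph.mem_neighborFinset _ _ _).mpr hab
        rw [hf a hv1] at this
        right; exact Finset.mem_singleton.mp this
      · simp only [Set.mem_singleton_iff] at ha
        subst ha
        have : b ∈ G.neighborFinset (f v) := (SimpleGraph.mem_neighborFinset _ _ _).mpr hab
        rw [hf (f v) hfv1] at this
        have hb : b = f (f v) := Finset.mem_singleton.mp this
        have : v = f (f v) := by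
          have := hadj (f v) hfv1
          have hvmem : v ∈ G.neighborFinset (f v) :=
            (SimpleGraph.mem_neighborFinset _ _ _).mpr (hadj v hv1).symm
          rw [hf (f v) hfv1] at hvmem
          exact Finset.mem_singleton.mp hvmem
        left; rw [hb, ← this]
    have hall : ∀ u : V, u ∈ ({v, f v} : Set V) := by
      intro u
      obtain ⟨p⟩ := hT.isConnected.preconnected v u
      exact walk_closed G _ hclosed p (Or.inl rfl)
    have : Fintype.card V ≤ ({v, f v} : Finset V).card := by
      refine Finset.card_le_card fun u _ => ?_
      have := hall u
      simp only [Set.mem_insert_iff, Set.mem_singleton_iff] at this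
      rcases this with rfl | rfl
      · exact Finset.mem_insert_self _ _
      · exact Finset.mem_insert_of_mem (Finset.mem_singleton_self _)
    have : ({v, f v} : Finset V).card ≤ 2 := Finset.card_insert_le _ _ |>.trans (by simp)
    omega
  -- f injective on leaves
  have hinj : Set.InjOn f Lset := by
    intro a ha b hb hab
    by_contra hne
    have ha1 := (Finset.mem_filter.mp ha).2
    have hb1 := (Finset.mem_filter.mp hb).2
    exact hcon (f a) a b hne (hadj a ha1).symm (by rw [hab]; exact (hadj b hb1).symm) ha1 hb1
  have hcard : Lset.card ≤ Mset.card :=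
    Finset.card_le_card_of_injOn f hmaps hinj
  omega
end

section
/- The triskelion graph is irreducibly odd, and it is the smallest nonempty irreducibly odd graph: every nonempty irreducibly odd graph has at least 6 vertices. -/
/-- The triskelion: a triangle 0,1,2 with a pendant vertex attached to each
triangle vertex (vertices relabelled from {1,...,6} to {0,...,5}). -/
def Triskelion : SimpleGraph (Fin 6) :=
  SimpleGraph.fromRel (fun a b =>
    (a, b) ∈ [((0 : Fin 6), (1 : Fin 6)), (0, 2), (1, 2), (0, 5), (1, 3), (2, 4)])

def BadF (n : ℕ) (f : Fin n → Fin n → Bool) : Prop :=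
  (∀ a b, f a b = f b a) ∧ (∀ a, f a a = false) ∧
  (∀ a : Fin n, Odd (Finset.univ.filter (fun b => f a b = true)).card) ∧
  (∀ u v : Fin n, u ≠ v → ∃ w, w ≠ u ∧ w ≠ v ∧ xor (f w u) (f w v) = true)

instance (n) (f) : Decidable (BadF n f) := by unfold BadF; infer_instance

def mk2 (a : Bool) (i j : Fin 2) : Bool :=
  if (i = 0 ∧ j = 1) ∨ (i = 1 ∧ j = 0) then a else false

def mk4 (a b c d e g : Bool) (i j : Fin 4) : Bool :=
  if (i = 0 ∧ j = 1) ∨ (i = 1 ∧ j = 0) then a else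
  if (i = 0 ∧ j = 2) ∨ (i = 2 ∧ j = 0) then b else
  if (i = 0 ∧ j = 3) ∨ (i = 3 ∧ j = 0) then c else
  if (i = 1 ∧ j = 2) ∨ (i = 2 ∧ j = 1) then d else
  if (i = 1 ∧ j = 3) ∨ (i = 3 ∧ j = 1) then e else
  if (i = 2 ∧ j = 3) ∨ (i = 3 ∧ j = 2) then g else false

lemma no2' : ∀ a : Bool, ¬ BadF 2 (mk2 a) := by decide
lemma no4' : ∀ a b c d e g : Bool, ¬ BadF 4 (mk4 a b c d e g) := by decide

lemma no2 (f : Fin 2 → Fin 2 → Bool) : ¬ BadF 2 f := by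
  intro h
  have hf : f = mk2 (f 0 1) := by
    funext i j
    fin_cases i <;> fin_cases j <;> simp [mk2]
    · exact h.2.1 0
    · exact h.1 1 0
    · exact h.2.1 1
  exact no2' (f 0 1) (hf ▸ h)

lemma no4 (f : Fin 4 → Fin 4 → Bool) : ¬ BadF 4 f := by
  intro h
  have hf : f = mk4 (f 0 1) (f 0 2) (f 0 3) (f 1 2) (f 1 3) (f 2 3) := by
    funext i j
    fin_cases i <;> fin_cases j <;>
      simp [mk4] <;> first | exact h.2.1 _ | exact h.1 _ _
  exact no4' _ _ _ _ _ _ (hf ▸ h)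

lemma ncard_deg {V : Type*} [Fintype V] (G : SimpleGraph V) [DecidableRel G.Adj] (v : V) :
    (G.neighborSet v).ncard = G.degree v := by
  rw [Set.ncard_eq_toFinset_card']
  congr 1

lemma bridge {V : Type} [Fintype V] (G : SimpleGraph V) (h : IrredOdd G) {n : ℕ}
    (hc : Fintype.card V = n) : ∃ f : Fin n → Fin n → Bool, BadF n f := by
  classical
  obtain ⟨e⟩ : Nonempty (V ≃ Fin n) := ⟨Fintype.equivFinOfCardEq hc⟩
  refine ⟨fun a b => decide (G.Adj (e.symm a) (e.symm b)), ?_, ?_, ?_, ?_⟩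
  · intro a b; simp [G.adj_comm]
  · intro a; simp
  · intro a
    have key : (Finset.univ.filter
        (fun b => decide (G.Adj (e.symm a) (e.symm b)) = true)).card
        = (G.neighborSet (e.symm a)).ncard := by
      rw [ncard_deg, SimpleGraph.degree]
      apply Finset.card_bij (fun b _ => e.symm b)
      · intro b hb
        simp only [Finset.mem_filter, decide_eq_true_eq] at hb
        simpa using hb.2
      · intro b _ b' _ hbb
        exact e.symm.injective hbb
      · intro x hx
        refine ⟨e x, ?_, by simp⟩
        simp only [Finset.mem_filter, decide_eq_true_eq, Finset.mem_univ, true_and,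
          Equiv.symm_apply_apply]
        simpa using hx
    rw [key]; exact h.1 _
  · intro u v huv
    obtain ⟨w, hw1, hw2, hx⟩ := h.2 (e.symm u) (e.symm v)
      (fun hh => huv (e.symm.injective hh))
    refine ⟨e w, ?_, ?_, ?_⟩
    · intro hh; exact hw1 (by rw [← hh]; simp)
    · intro hh; exact hw2 (by rw [← hh]; simp)
    · simp only [Equiv.symm_apply_apply]
      rcases hx with ⟨h1, h2⟩ | ⟨h1, h2⟩ <;> simp [h1, h2]

instance : DecidableRel Triskelion.Adj := fun a b =>
  decidable_of_iff (a ≠ b ∧ _) (SimpleGraph.fromRel_adj _ a b).symm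

lemma trisk : IrredOdd Triskelion := by
  constructor
  · intro v
    rw [ncard_deg]
    revert v
    decide
  · unfold Xor'
    decide

/-- The triskelion is irreducibly odd, and every nonempty
irreducibly odd graph has at least 6 vertices. -/
theorem triskelion_smallest :
    IrredOdd Triskelion ∧
      ∀ (V : Type) [Fintype V] (G : SimpleGraph V),
        Nonempty V → IrredOdd G → 6 ≤ Fintype.card V := by
  refine ⟨trisk, ?_⟩
  intro V _ G hne h
  classical
  have hdeg : ∀ v, Odd (G.degree v) := fun v => by
    rw [← ncard_deg]; exact h.1 v
  have heven : Even (Fintype.card V) := by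
    have := SimpleGraph.even_card_odd_degree_vertices G
    rwa [Finset.filter_true_of_mem (fun v _ => hdeg v), Finset.card_univ] at this
  have h1 : 1 ≤ Fintype.card V := Fintype.card_pos_iff.mpr hne
  have h2 : Fintype.card V ≠ 2 := fun hc => by
    obtain ⟨f, hf⟩ := bridge G h hc; exact no2 f hf
  have h4 : Fintype.card V ≠ 4 := fun hc => by
    obtain ⟨f, hf⟩ := bridge G h hc; exact no4 f hf
  obtain ⟨r, hr⟩ := heven
  omega
end

section
/- For every k ≥ 3, the morningstar graph M_k is irreducibly odd. -/
/-- The morningstar graph `M k` on `2k` vertices: a `k`-cycle `inl 0, ..., inl (k-1)`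
together with pendant vertices `inr i` adjacent only to `inl i`. -/
def Morningstar (k : ℕ) : SimpleGraph (Fin k ⊕ Fin k) :=
  SimpleGraph.fromRel (fun x y =>
    match x, y with
    | Sum.inl i, Sum.inl j => (j : ℕ) = ((i : ℕ) + 1) % k
    | Sum.inl i, Sum.inr j => i = j
    | _, _ => False)

lemma ms_adj_ll (k : ℕ) (i j : Fin k) :
    (Morningstar k).Adj (Sum.inl i) (Sum.inl j) ↔
      i ≠ j ∧ ((j : ℕ) = ((i : ℕ) + 1) % k ∨ (i : ℕ) = ((j : ℕ) + 1) % k) := by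
  simp [Morningstar, SimpleGraph.fromRel_adj]

lemma ms_adj_lr (k : ℕ) (i j : Fin k) :
    (Morningstar k).Adj (Sum.inl i) (Sum.inr j) ↔ i = j := by
  simp [Morningstar, SimpleGraph.fromRel_adj]

lemma ms_adj_rl (k : ℕ) (i j : Fin k) :
    (Morningstar k).Adj (Sum.inr i) (Sum.inl j) ↔ j = i := by
  simp [Morningstar, SimpleGraph.fromRel_adj]

lemma ms_adj_rr (k : ℕ) (i j : Fin k) :
    ¬ (Morningstar k).Adj (Sum.inr i) (Sum.inr j) := by
  simp [Morningstar, SimpleGraph.fromRel_adj]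

lemma ms_mod_succ (k i : ℕ) (hi : i < k) :
    (i + 1) % k = if i + 1 = k then 0 else i + 1 := by
  split
  · next h => rw [h, Nat.mod_self]
  · exact Nat.mod_eq_of_lt (by omega)

lemma ms_mod_pred (k i : ℕ) (hk : 1 ≤ k) (hi : i < k) :
    (i + (k - 1)) % k = if i = 0 then k - 1 else i - 1 := by
  split
  · subst ‹i = 0›; simp [Nat.mod_eq_of_lt (by omega : k - 1 < k)]
  · have h : i + (k - 1) = k + (i - 1) := by omega
    rw [h, Nat.add_mod_left, Nat.mod_eq_of_lt (by omega)]

/-- For every k ≥ 3, the morningstar graph M_k is irreducibly odd. -/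
theorem morningstar_irredOdd (k : ℕ) (hk : 3 ≤ k) : IrredOdd (Morningstar k) := by
  have hk0 : 0 < k := by omega
  constructor
  · intro v
    cases v with
    | inr i =>
      have h : (Morningstar k).neighborSet (Sum.inr i) = {Sum.inl i} := by
        ext x
        cases x with
        | inl j =>
          simp [SimpleGraph.mem_neighborSet, ms_adj_rl, eq_comm]
        | inr j =>
          simp [SimpleGraph.mem_neighborSet, ms_adj_rr]
      rw [h, Set.ncard_singleton]
      exact odd_one
    | inl i =>
      set j1 : Fin k := ⟨((i : ℕ) + 1) % k, Nat.mod_lt _ hk0⟩ with hj1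
      set j2 : Fin k := ⟨((i : ℕ) + (k - 1)) % k, Nat.mod_lt _ hk0⟩ with hj2
      have e1 := ms_mod_succ k i i.isLt
      have e2 := ms_mod_pred k i (by omega) i.isLt
      have h : (Morningstar k).neighborSet (Sum.inl i) =
          {Sum.inl j1, Sum.inl j2, Sum.inr i} := by
        ext x
        cases x with
        | inl j =>
          have e3 := ms_mod_succ k j j.isLt
          simp only [SimpleGraph.mem_neighborSet, ms_adj_ll, Set.mem_insert_iff,
            Set.mem_singleton_iff, Sum.inl.injEq, Fin.ext_iff, hj1, hj2,
            ne_eq, reduceCtorEq, or_false]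
          have hik := i.isLt
          have hjk := j.isLt
          rw [e1, e2, e3]
          constructor
          · rintro ⟨hne, h | h⟩
            · left; split_ifs at h ⊢ <;> omega
            · right; split_ifs at h ⊢ <;> omega
          · rintro (h | h)
            · constructor
              · intro he; rw [he] at h; split_ifs at h <;> omega
              · left; split_ifs at h ⊢ <;> omega
            · constructor
              · intro he; rw [he] at h; split_ifs at h <;> omega
              · right; split_ifs at h ⊢ <;> omega
        | inr j =>
          simp [SimpleGraph.mem_neighborSet, ms_adj_lr, eq_comm]
      have hne12 : j1 ≠ j2 := by
        simp only [hj1, hj2, Fin.ext_iff, ne_eq]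
        have hik := i.isLt
        rw [e1, e2]; split_ifs <;> omega
      rw [h, Set.ncard_insert_of_notMem (by simp [hne12]),
        Set.ncard_insert_of_notMem (by simp), Set.ncard_singleton]
      exact ⟨1, rfl⟩
  · intro u v huv
    cases u with
    | inl i =>
      cases v with
      | inl j =>
        have hij : i ≠ j := fun h => huv (by rw [h])
        refine ⟨Sum.inr i, by simp, by simp, Or.inl ⟨?_, ?_⟩⟩
        · rw [ms_adj_rl]
        · rw [ms_adj_rl]; exact fun h => hij h.symm
      | inr j =>
        by_cases hij : i = j
        · subst hij
          set j1 : Fin k := ⟨((i : ℕ) + 1) % k, Nat.mod_lt _ hk0⟩ with hj1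
          have e1 := ms_mod_succ k i i.isLt
          have hne : j1 ≠ i := by
            have hv : ((i : ℕ) + 1) % k ≠ (i : ℕ) := by
              have := i.isLt; rw [e1]; split_ifs <;> omega
            exact fun h => hv (congrArg Fin.val h)
          refine ⟨Sum.inl j1, by simpa using hne, by simp, Or.inl ⟨?_, ?_⟩⟩
          · rw [ms_adj_ll]
            refine ⟨hne, Or.inr rfl⟩
          · rw [ms_adj_lr]; exact hne
        · refine ⟨Sum.inr i, by simp, by simpa using hij, Or.inl ⟨?_, ?_⟩⟩
          · rw [ms_adj_rl]
          · exact ms_adj_rr k i j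
    | inr i =>
      cases v with
      | inl j =>
        by_cases hij : i = j
        · subst hij
          set j1 : Fin k := ⟨((i : ℕ) + 1) % k, Nat.mod_lt _ hk0⟩ with hj1
          have e1 := ms_mod_succ k i i.isLt
          have hne : j1 ≠ i := by
            have hv : ((i : ℕ) + 1) % k ≠ (i : ℕ) := by
              have := i.isLt; rw [e1]; split_ifs <;> omega
            exact fun h => hv (congrArg Fin.val h)
          refine ⟨Sum.inl j1, by simp, by simpa using hne, Or.inr ⟨?_, ?_⟩⟩
          · rw [ms_adj_ll]
            refine ⟨hne, Or.inr rfl⟩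
          · rw [ms_adj_lr]; exact hne
        · refine ⟨Sum.inr j, by simpa using Ne.symm hij, by simp, Or.inr ⟨?_, ?_⟩⟩
          · rw [ms_adj_rl]
          · exact ms_adj_rr k j i
      | inr j =>
        have hij : i ≠ j := fun h => huv (by rw [h])
        refine ⟨Sum.inl i, by simp, by simp, Or.inl ⟨?_, ?_⟩⟩
        · rw [ms_adj_lr]
        · rw [ms_adj_lr]; exact hij
end

section
/- Every nonempty irreducibly odd graph contains the triskelion as a graph minor. -/
/-- `H` is a minor of `G`: there are disjoint connected branch sets in `G`,
one for each vertex of `H`, with an edge of `G` between the branch sets of any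
two adjacent vertices of `H`. -/
def IsMinor {W V : Type*} (H : SimpleGraph W) (G : SimpleGraph V) : Prop :=
  ∃ φ : W → Set V,
    (∀ w, (G.induce (φ w)).Connected) ∧
    (Pairwise fun w w' => Disjoint (φ w) (φ w')) ∧
    (∀ w w', H.Adj w w' → ∃ a ∈ φ w, ∃ b ∈ φ w', G.Adj a b)

section TriskelionAux

open Set

instance inst_s9 : DecidableRel Triskelion.Adj := fun a b =>
  decidable_of_iff' _ (SimpleGraph.fromRel_adj _ a b)

lemma trisk_adj_iff : ∀ w w' : Fin 6, Triskelion.Adj w w' ↔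
    (w, w') ∈ ([ (0,1),(1,0),(0,2),(2,0),(1,2),(2,1),(0,5),(5,0),(1,3),(3,1),(2,4),(4,2) ] :
      List (Fin 6 × Fin 6)) := by decide

variable {V : Type*} {G : SimpleGraph V}

def IsCyc (G : SimpleGraph V) (g : ℕ) (f : ℕ → V) : Prop :=
  3 ≤ g ∧ (∀ i < g, G.Adj (f i) (f ((i+1) % g))) ∧ Set.InjOn f (Set.Iio g)

lemma arc_connected {f : ℕ → V} {a b : ℕ} (hab : a < b)
    (hf : ∀ i, a ≤ i → i + 1 < b → G.Adj (f i) (f (i+1))) :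
    (G.induce (f '' Set.Ico a b)).Connected := by
  rw [SimpleGraph.connected_iff]
  have hma : f a ∈ f '' Set.Ico a b := ⟨a, ⟨le_refl a, hab⟩, rfl⟩
  constructor
  · have key : ∀ k, a ≤ k → k < b → ∀ hm : f k ∈ f '' Set.Ico a b,
        (G.induce (f '' Set.Ico a b)).Reachable ⟨f k, hm⟩ ⟨f a, hma⟩ := by
      intro k hak
      induction k, hak using Nat.le_induction with
      | base => intro _ hm; rfl
      | succ k hk ih =>
        intro hkb hm
        have hmk : f k ∈ f '' Set.Ico a b := ⟨k, ⟨hk, by omega⟩, rfl⟩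
        refine SimpleGraph.Reachable.trans ?_ (ih (by omega) hmk)
        have hadj : (G.induce (f '' Set.Ico a b)).Adj ⟨f (k+1), hm⟩ ⟨f k, hmk⟩ := by
          simp only [SimpleGraph.comap_adj, Function.Embedding.coe_subtype]
          exact (hf k hk hkb).symm
        exact hadj.reachable
    rintro ⟨x, hx⟩ ⟨y, hy⟩
    obtain ⟨i, hi, rfl⟩ := hx
    obtain ⟨j, hj, rfl⟩ := hy
    exact (key i hi.1 hi.2 ⟨i, hi, rfl⟩).trans (key j hj.1 hj.2 ⟨j, hj, rfl⟩).symm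
  · exact ⟨⟨f a, hma⟩⟩

lemma image_disjoint {F : ℕ → V} {N : ℕ} (hinj : Set.InjOn F (Set.Iio N))
    {a b c d : ℕ} (hbN : b ≤ N) (hdN : d ≤ N) (h : b ≤ c ∨ d ≤ a) :
    Disjoint (F '' Set.Ico a b) (F '' Set.Ico c d) := by
  rw [Set.disjoint_left]
  rintro x ⟨i, hi, rfl⟩ ⟨j, hj, hfj⟩
  simp only [Set.mem_Ico] at hi hj
  have : j = i := hinj (by simp only [Set.mem_Iio]; omega) (by simp only [Set.mem_Iio]; omega) hfj
  omega

lemma minor_of_cyc_legs {g : ℕ} {f : ℕ → V} (hc : IsCyc G g f) {y0 y1 y2 : V}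
    (hy0 : y0 ∉ f '' Set.Iio g) (hy1 : y1 ∉ f '' Set.Iio g) (hy2 : y2 ∉ f '' Set.Iio g)
    (hd01 : y0 ≠ y1) (hd02 : y0 ≠ y2) (hd12 : y1 ≠ y2)
    (ha0 : G.Adj (f 0) y0) (ha1 : G.Adj (f 1) y1) (ha2 : G.Adj (f 2) y2) :
    IsMinor Triskelion G := by
  classical
  obtain ⟨hg3, hadj, hinj⟩ := hc
  set F : ℕ → V := fun i =>
    if i < g then f i else if i = g then y0 else if i = g + 1 then y1 else y2 with hF
  have hFlt : ∀ i, i < g → F i = f i := by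
    intro i hi; simp only [hF]; rw [if_pos hi]
  have hFg : F g = y0 := by
    simp only [hF]; rw [if_neg (by omega)]; simp
  have hFg1 : F (g+1) = y1 := by
    simp only [hF]; rw [if_neg (by omega), if_neg (by omega)]; simp
  have hFg2 : F (g+2) = y2 := by
    simp only [hF]; rw [if_neg (by omega), if_neg (by omega), if_neg (by omega)]
  have hmemf : ∀ i, i < g → f i ∈ f '' Set.Iio g := fun i hi => ⟨i, by simpa using hi, rfl⟩
  have hFinj : Set.InjOn F (Set.Iio (g+3)) := by
    intro i hi j hj hij
    simp only [Set.mem_Iio] at hi hj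
    rcases lt_or_ge i g with hig | hig <;> rcases lt_or_ge j g with hjg | hjg
    · exact hinj (by simpa using hig) (by simpa using hjg) (by rwa [hFlt i hig, hFlt j hjg] at hij)
    · exfalso
      rw [hFlt i hig] at hij
      have hj' : j = g ∨ j = g + 1 ∨ j = g + 2 := by omega
      rcases hj' with rfl | rfl | rfl
      · rw [hFg] at hij; exact hy0 (hij ▸ hmemf i hig)
      · rw [hFg1] at hij; exact hy1 (hij ▸ hmemf i hig)
      · rw [hFg2] at hij; exact hy2 (hij ▸ hmemf i hig)
    · exfalso
      rw [hFlt j hjg] at hij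
      have hi' : i = g ∨ i = g + 1 ∨ i = g + 2 := by omega
      rcases hi' with rfl | rfl | rfl
      · rw [hFg] at hij; exact hy0 (hij ▸ hmemf j hjg)
      · rw [hFg1] at hij; exact hy1 (hij ▸ hmemf j hjg)
      · rw [hFg2] at hij; exact hy2 (hij ▸ hmemf j hjg)
    · have hi' : i = g ∨ i = g + 1 ∨ i = g + 2 := by omega
      have hj' : j = g ∨ j = g + 1 ∨ j = g + 2 := by omega
      rcases hi' with rfl | rfl | rfl <;> rcases hj' with rfl | rfl | rfl <;>
        simp only [hFg, hFg1, hFg2] at hij ⊢ <;>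
        first
          | rfl
          | exact absurd hij hd01
          | exact absurd hij hd02
          | exact absurd hij hd12
          | exact absurd hij.symm hd01
          | exact absurd hij.symm hd02
          | exact absurd hij.symm hd12
  refine ⟨fun w => match w with
    | 0 => F '' Set.Ico 0 1
    | 1 => F '' Set.Ico 1 2
    | 2 => F '' Set.Ico 2 g
    | 3 => F '' Set.Ico (g+1) (g+2)
    | 4 => F '' Set.Ico (g+2) (g+3)
    | 5 => F '' Set.Ico g (g+1), ?_, ?_, ?_⟩
  · have harc : ∀ a b : ℕ, a < b → (∀ i, a ≤ i → i + 1 < b → b ≤ g) →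
        (G.induce (F '' Set.Ico a b)).Connected := by
      intro a b hab hbg
      apply arc_connected hab
      intro i hai hib
      have hbg' := hbg i hai hib
      rw [hFlt i (by omega), hFlt (i+1) (by omega)]
      have := hadj i (by omega)
      rwa [Nat.mod_eq_of_lt (by omega)] at this
    intro w
    fin_cases w
    · exact harc 0 1 (by omega) (by intro i h1 h2; omega)
    · exact harc 1 2 (by omega) (by intro i h1 h2; omega)
    · exact harc 2 g (by omega) (by intro i h1 h2; omega)
    · exact harc (g+1) (g+2) (by omega) (by intro i h1 h2; omega)
    · exact harc (g+2) (g+3) (by omega) (by intro i h1 h2; omega)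
    · exact harc g (g+1) (by omega) (by intro i h1 h2; omega)
  · intro w w' hww'
    fin_cases w <;> fin_cases w' <;>
      first
      | exact absurd rfl hww'
      | exact image_disjoint hFinj (by omega) (by omega) (by omega)
  · intro w w' hww'
    rw [trisk_adj_iff] at hww'
    have m0 : F 0 ∈ F '' Set.Ico (0:ℕ) 1 := ⟨0, by simp, rfl⟩
    have m1 : F 1 ∈ F '' Set.Ico (1:ℕ) 2 := ⟨1, by simp, rfl⟩
    have m2 : F 2 ∈ F '' Set.Ico (2:ℕ) g := ⟨2, by simp only [Set.mem_Ico]; omega, rfl⟩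
    have m2' : F (g-1) ∈ F '' Set.Ico (2:ℕ) g := ⟨g-1, by simp only [Set.mem_Ico]; omega, rfl⟩
    have m3 : F (g+1) ∈ F '' Set.Ico (g+1) (g+2) := ⟨g+1, by simp, rfl⟩
    have m4 : F (g+2) ∈ F '' Set.Ico (g+2) (g+3) := ⟨g+2, by simp, rfl⟩
    have m5 : F g ∈ F '' Set.Ico g (g+1) := ⟨g, by simp, rfl⟩
    have e01 : G.Adj (F 0) (F 1) := by
      rw [hFlt 0 (by omega), hFlt 1 (by omega)]
      have := hadj 0 (by omega); rwa [Nat.mod_eq_of_lt (by omega)] at this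
    have e12 : G.Adj (F 1) (F 2) := by
      rw [hFlt 1 (by omega), hFlt 2 (by omega)]
      have := hadj 1 (by omega); rwa [Nat.mod_eq_of_lt (by omega)] at this
    have e20 : G.Adj (F (g-1)) (F 0) := by
      rw [hFlt (g-1) (by omega), hFlt 0 (by omega)]
      have := hadj (g-1) (by omega)
      have h1 : g - 1 + 1 = g := by omega
      rwa [h1, Nat.mod_self] at this
    have eA : G.Adj (F 0) (F g) := by rw [hFlt 0 (by omega), hFg]; exact ha0
    have eB : G.Adj (F 1) (F (g+1)) := by rw [hFlt 1 (by omega), hFg1]; exact ha1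
    have eC : G.Adj (F 2) (F (g+2)) := by rw [hFlt 2 (by omega), hFg2]; exact ha2
    fin_cases hww'
    · exact ⟨_, m0, _, m1, e01⟩
    · exact ⟨_, m1, _, m0, e01.symm⟩
    · exact ⟨_, m0, _, m2', e20.symm⟩
    · exact ⟨_, m2', _, m0, e20⟩
    · exact ⟨_, m1, _, m2, e12⟩
    · exact ⟨_, m2, _, m1, e12.symm⟩
    · exact ⟨_, m0, _, m5, eA⟩
    · exact ⟨_, m5, _, m0, eA.symm⟩
    · exact ⟨_, m1, _, m3, eB⟩
    · exact ⟨_, m3, _, m1, eB.symm⟩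
    · exact ⟨_, m2, _, m4, eC⟩
    · exact ⟨_, m4, _, m2, eC.symm⟩


lemma exists_nbr [Fintype V] (hOdd : ∀ v : V, Odd (G.neighborSet v).ncard) (v : V) :
    ∃ w, G.Adj v w := by
  have h := hOdd v
  have hpos : 0 < (G.neighborSet v).ncard := by rcases h with ⟨k, hk⟩; omega
  rcases (Set.ncard_pos (Set.toFinite _)).mp hpos with ⟨w, hw⟩
  exact ⟨w, hw⟩

lemma no_twins (hSep : ∀ u v : V, u ≠ v → ∃ w : V, w ≠ u ∧ w ≠ v ∧ Xor' (G.Adj w u) (G.Adj w v))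
    {u v : V} (huv : u ≠ v)
    (h : ∀ w, w ≠ u → w ≠ v → (G.Adj w u ↔ G.Adj w v)) : False := by
  rcases hSep u v huv with ⟨w, hwu, hwv, hx⟩
  rcases hx with ⟨h1, h2⟩ | ⟨h1, h2⟩
  · exact h2 ((h w hwu hwv).mp h1)
  · exact h2 ((h w hwu hwv).mpr h1)

lemma exists_cyc [Fintype V] (hne : Nonempty V)
    (hOdd : ∀ v : V, Odd (G.neighborSet v).ncard)
    (hSep : ∀ u v : V, u ≠ v → ∃ w : V, w ≠ u ∧ w ≠ v ∧ Xor' (G.Adj w u) (G.Adj w v)) :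
    ∃ g f, IsCyc G g f := by
  classical
  by_contra hnc
  push_neg at hnc
  set P : ℕ → Prop := fun n => ∃ f : ℕ → V,
    (∀ i < n, G.Adj (f i) (f (i+1))) ∧ Set.InjOn f (Set.Iic n) with hP
  have hP0 : P 0 := by
    obtain ⟨v⟩ := hne
    exact ⟨fun _ => v, fun i hi => absurd hi (by omega),
      fun i hi j hj _ => by simp only [Set.mem_Iic, Nat.le_zero] at hi hj; omega⟩
  have hbound : ∀ n, P n → n < Fintype.card V := by
    rintro n ⟨f, _, hinj⟩
    have hcard : Fintype.card (Fin (n+1)) ≤ Fintype.card V := by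
      apply Fintype.card_le_of_injective (fun k => f k.val)
      intro k1 k2 h
      have := hinj (by simp only [Set.mem_Iic]; omega) (by simp only [Set.mem_Iic]; omega) h
      exact Fin.ext this
    simpa using hcard
  set n := Nat.findGreatest P (Fintype.card V) with hn
  have hPn : P n := Nat.findGreatest_spec (Nat.zero_le _) hP0
  have hmax : ∀ m, P m → m ≤ n := fun m hm =>
    Nat.le_findGreatest (le_of_lt (hbound m hm)) hm
  -- endpoint lemma : every neighbour of the start of a maximum path is the second vertex
  have hend : ∀ f : ℕ → V, (∀ i < n, G.Adj (f i) (f (i+1))) → Set.InjOn f (Set.Iic n) →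
      1 ≤ n → ∀ w, G.Adj (f 0) w → w = f 1 := by
    intro f hfa hfi hn1 w hw
    by_cases hwim : ∃ j, j ≤ n ∧ f j = w
    · obtain ⟨j, hj, rfl⟩ := hwim
      rcases Nat.lt_or_ge j 2 with hj2 | hj2
      · interval_cases j
        · exact absurd hw (G.irrefl)
        · rfl
      · exfalso
        refine hnc (j+1) f ⟨by omega, ?_, ?_⟩
        · intro i hi
          rcases Nat.lt_or_ge i j with hij | hij
          · rw [Nat.mod_eq_of_lt (by omega)]
            exact hfa i (by omega)
          · have : i = j := by omega
            subst this
            rw [Nat.mod_self]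
            exact hw.symm
        · refine hfi.mono (fun x hx => ?_)
          simp only [Set.mem_Iio] at hx
          simp only [Set.mem_Iic]
          omega
    · push_neg at hwim
      have hPn1 : P (n+1) := by
        refine ⟨fun i => if i = 0 then w else f (i-1), ?_, ?_⟩
        · intro i hi
          show G.Adj (if i = 0 then w else f (i-1)) (if i + 1 = 0 then w else f (i+1-1))
          rcases Nat.eq_zero_or_pos i with rfl | hipos
          · rw [if_pos rfl, if_neg (by omega)]
            exact hw.symm
          · rw [if_neg (by omega), if_neg (by omega)]
            have h1 : i - 1 + 1 = i := by omega
            have h2 : i + 1 - 1 = i := by omega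
            rw [h2, ← h1]
            exact hfa (i-1) (by omega)
        · intro i hi j hj hij
          simp only [Set.mem_Iic] at hi hj
          have hij' : (if i = 0 then w else f (i-1)) = (if j = 0 then w else f (j-1)) := hij
          rcases Nat.eq_zero_or_pos i with rfl | hipos <;> rcases Nat.eq_zero_or_pos j with rfl | hjpos
          · rfl
          · rw [if_pos rfl, if_neg (by omega)] at hij'
            exact absurd hij'.symm (hwim (j-1) (by omega))
          · rw [if_neg (by omega), if_pos rfl] at hij'
            exact absurd hij' (hwim (i-1) (by omega))
          · rw [if_neg (by omega), if_neg (by omega)] at hij'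
            have := hfi (by simp only [Set.mem_Iic]; omega)
              (by simp only [Set.mem_Iic]; omega) hij'
            omega
      have := hmax (n+1) hPn1
      omega
  obtain ⟨f, hfa, hfi⟩ := hPn
  have hn1 : 1 ≤ n := by
    by_contra h
    have hn0 : n = 0 := by omega
    obtain ⟨w, hw⟩ := exists_nbr hOdd (f 0)
    have hP1 : P 1 := by
      refine ⟨fun i => if i = 0 then f 0 else w, ?_, ?_⟩
      · intro i hi
        have : i = 0 := by omega
        subst this
        simpa using hw
      · intro i hi j hj hij
        simp only [Set.mem_Iic] at hi hj
        have hij' : (if i = 0 then f 0 else w) = (if j = 0 then f 0 else w) := hij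
        rcases Nat.eq_zero_or_pos i with rfl | hipos <;> rcases Nat.eq_zero_or_pos j with rfl | hjpos
        · rfl
        · rw [if_pos rfl, if_neg (by omega)] at hij'
          exact absurd hij' hw.ne
        · rw [if_neg (by omega), if_pos rfl] at hij'
          exact absurd hij'.symm hw.ne
        · omega
    have := hmax 1 hP1
    omega
  -- reversed path
  have hrev : ∀ w, G.Adj (f n) w → w = f (n-1) := by
    have hfa' : ∀ i < n, G.Adj ((fun k => f (n - k)) i) ((fun k => f (n - k)) (i+1)) := by
      intro i hi
      show G.Adj (f (n - i)) (f (n - (i+1)))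
      have h1 : n - i = (n - (i+1)) + 1 := by omega
      rw [h1]
      exact (hfa (n - (i+1)) (by omega)).symm
    have hfi' : Set.InjOn (fun k => f (n - k)) (Set.Iic n) := by
      intro i hi j hj hij
      simp only [Set.mem_Iic] at hi hj
      have := hfi (by simp only [Set.mem_Iic]; omega)
        (by simp only [Set.mem_Iic]; omega) hij
      omega
    intro w hw
    have := hend (fun k => f (n - k)) hfa' hfi' hn1 w (by simpa using hw)
    simpa using this
  rcases Nat.lt_or_ge n 2 with hn2 | hn2
  · -- n = 1 : K2-component, twins
    have hn1' : n = 1 := by omega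
    apply no_twins hSep (u := f 0) (v := f 1)
    · intro h
      have := hfi (by simp only [Set.mem_Iic]; omega)
        (by simp only [Set.mem_Iic]; omega) h
      omega
    · intro w hw0 hw1
      constructor
      · intro h
        exact absurd (hend f hfa hfi hn1 w h.symm) hw1
      · intro h
        have h' : G.Adj (f n) w := by rw [hn1']; exact h.symm
        have := hrev w h'
        rw [hn1'] at this
        norm_num at this
        exact absurd this hw0
  · -- n ≥ 2 : third neighbour of f 1
    have hadj01 : G.Adj (f 0) (f 1) := hfa 0 (by omega)
    have hadj12 : G.Adj (f 1) (f 2) := hfa 1 (by omega)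
    have hne02 : f 0 ≠ f 2 := by
      intro h
      have := hfi (by simp only [Set.mem_Iic]; omega)
        (by simp only [Set.mem_Iic]; omega) h
      omega
    have hsub : ¬ (G.neighborSet (f 1) ⊆ {f 0, f 2}) := by
      intro hsub
      have heq : G.neighborSet (f 1) = {f 0, f 2} := by
        apply Set.Subset.antisymm hsub
        intro x hx
        rcases hx with rfl | rfl
        · exact hadj01.symm
        · exact hadj12
      have : (G.neighborSet (f 1)).ncard = 2 := by
        rw [heq]; exact Set.ncard_pair hne02
      have hodd := hOdd (f 1)
      rw [this] at hodd
      exact absurd (Nat.odd_iff.mp hodd) (by omega)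
    obtain ⟨w, hwmem, hwpair⟩ : ∃ w, w ∈ G.neighborSet (f 1) ∧ w ∉ ({f 0, f 2} : Set V) := by
      by_contra h
      push_neg at h
      exact hsub (fun x hx => h x hx)
    have hw1 : G.Adj (f 1) w := hwmem
    simp only [Set.mem_insert_iff, Set.mem_singleton_iff, not_or] at hwpair
    obtain ⟨hw0, hw2⟩ := hwpair
    by_cases hwim : ∃ j, j ≤ n ∧ f j = w
    · obtain ⟨j, hj, rfl⟩ := hwim
      have hj1 : j ≠ 1 := fun h => (h ▸ hw1).ne rfl
      have hj0 : j ≠ 0 := fun h => hw0 (by rw [h])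
      have hj2 : j ≠ 2 := fun h => hw2 (by rw [h])
      refine hnc j (fun i => f (i+1)) ⟨by omega, ?_, ?_⟩
      · intro i hi
        show G.Adj (f (i+1)) (f ((i+1) % j + 1))
        rcases Nat.lt_or_ge i (j-1) with hij | hij
        · rw [Nat.mod_eq_of_lt (by omega)]
          exact hfa (i+1) (by omega)
        · have h0 : i = j - 1 := by omega
          subst h0
          have h1 : j - 1 + 1 = j := by omega
          rw [h1, Nat.mod_self, Nat.zero_add]
          exact hw1.symm
      · intro i hi j' hj' hij
        simp only [Set.mem_Iio] at hi hj'
        have := hfi (by simp only [Set.mem_Iic]; omega)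
          (by simp only [Set.mem_Iic]; omega) hij
        omega
    · push_neg at hwim
      -- alternative maximum path starting at w
      set f' : ℕ → V := fun i => if i = 0 then w else f i with hf'
      have hfa' : ∀ i < n, G.Adj (f' i) (f' (i+1)) := by
        intro i hi
        rcases Nat.eq_zero_or_pos i with rfl | hipos
        · have h1 : ¬ ((0:ℕ)+1 = 0) := by omega
          simp only [hf', if_pos rfl, if_neg h1]
          exact hw1.symm
        · have h1 : ¬ (i = 0) := by omega
          have h2 : ¬ (i+1 = 0) := by omega
          simp only [hf', if_neg h1, if_neg h2]
          exact hfa i hi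
      have hfi' : Set.InjOn f' (Set.Iic n) := by
        intro i hi j hj hij
        simp only [Set.mem_Iic] at hi hj
        rcases Nat.eq_zero_or_pos i with rfl | hipos <;> rcases Nat.eq_zero_or_pos j with rfl | hjpos
        · rfl
        · have hj0 : ¬ (j = 0) := by omega
          simp only [hf', if_pos rfl, if_neg hj0] at hij
          exact absurd hij.symm (hwim j hj)
        · have hi0 : ¬ (i = 0) := by omega
          simp only [hf', if_neg hi0, if_pos rfl] at hij
          exact absurd hij (hwim i hi)
        · have hi0 : ¬ (i = 0) := by omega
          have hj0 : ¬ (j = 0) := by omega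
          simp only [hf', if_neg hi0, if_neg hj0] at hij
          have := hfi (by simp only [Set.mem_Iic]; omega)
            (by simp only [Set.mem_Iic]; omega) hij
          omega
      have hend' := hend f' hfa' hfi' hn1
      have hendf := hend f hfa hfi hn1
      apply no_twins hSep (u := w) (v := f 0)
      · exact fun h => hw0 h
      · intro z hzw hz0
        have hf'0 : f' 0 = w := by simp [hf']
        have hf'1 : f' 1 = f 1 := by simp [hf']
        constructor
        · intro h
          have := hend' z (by rw [hf'0]; exact h.symm)
          rw [hf'1] at this
          subst this
          exact hadj01.symm
        · intro h
          have := hendf z h.symm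
          subst this
          exact hw1


variable [Fintype V]

lemma sdr3 {A B C : Set V} (hA : Odd A.ncard) (hB : Odd B.ncard) (hC : Odd C.ncard)
    (hAB : A ≠ B) (hAC : A ≠ C) (hBC : B ≠ C) :
    ∃ a ∈ A, ∃ b ∈ B, ∃ c ∈ C, a ≠ b ∧ a ≠ c ∧ b ≠ c := by
  classical
  have hposA : 0 < A.ncard := by rcases hA with ⟨k, hk⟩; omega
  have hposB : 0 < B.ncard := by rcases hB with ⟨k, hk⟩; omega
  have hposC : 0 < C.ncard := by rcases hC with ⟨k, hk⟩; omega
  obtain ⟨b0, hb0⟩ := (Set.ncard_pos (Set.toFinite _)).mp hposB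
  -- step 1 : a ∈ A, b ∈ B with a ≠ b
  obtain ⟨a, ha, b, hb, hab⟩ : ∃ a ∈ A, ∃ b ∈ B, a ≠ b := by
    by_cases h : ∃ a ∈ A, a ≠ b0
    · obtain ⟨a, ha, hane⟩ := h
      exact ⟨a, ha, b0, hb0, hane⟩
    · push_neg at h
      have hAe : A = {b0} := by
        apply Set.eq_singleton_iff_nonempty_unique_mem.mpr
        exact ⟨(Set.ncard_pos (Set.toFinite _)).mp hposA, h⟩
      have : ∃ b' ∈ B, b' ≠ b0 := by
        by_contra h2
        push_neg at h2
        have hBe : B = {b0} := by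
          apply Set.eq_singleton_iff_nonempty_unique_mem.mpr
          exact ⟨⟨b0, hb0⟩, h2⟩
        exact hAB (hAe.trans hBe.symm)
      obtain ⟨b', hb', hbne⟩ := this
      exact ⟨b0, by rw [hAe]; rfl, b', hb', fun h' => hbne h'.symm⟩
  -- step 2
  by_cases h2 : ∃ c ∈ C, c ≠ a ∧ c ≠ b
  · obtain ⟨c, hc, hca, hcb⟩ := h2
    exact ⟨a, ha, b, hb, c, hc, hab, fun h => hca h.symm, fun h => hcb h.symm⟩
  · push_neg at h2
    have hCsub : C ⊆ {a, b} := by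
      intro c hc
      rcases eq_or_ne c a with rfl | hca
      · exact Set.mem_insert _ _
      · exact Set.mem_insert_of_mem _ (h2 c hc hca)
    have hC1 : C.ncard = 1 := by
      have hle : C.ncard ≤ 2 := by
        have := Set.ncard_le_ncard hCsub (Set.toFinite _)
        have h2' : ({a, b} : Set V).ncard = 2 := Set.ncard_pair hab
        omega
      rcases hC with ⟨k, hk⟩; omega
    obtain ⟨x, hx⟩ := Set.ncard_eq_one.mp hC1
    have hxab : x ∈ ({a, b} : Set V) := hCsub (by rw [hx]; rfl)
    rcases hxab with rfl | hxb
    · -- C = {a}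
      by_cases h3 : ∃ a' ∈ A, a' ≠ x ∧ a' ≠ b
      · obtain ⟨a', ha', h1, h2'⟩ := h3
        exact ⟨a', ha', b, hb, x, by rw [hx]; rfl, h2', h1, fun h => hab h.symm⟩
      · push_neg at h3
        have hAsub : A ⊆ {x, b} := by
          intro a' ha'
          rcases eq_or_ne a' x with rfl | h'
          · exact Set.mem_insert _ _
          · exact Set.mem_insert_of_mem _ (h3 a' ha' h')
        have hA1 : A.ncard = 1 := by
          have hle : A.ncard ≤ 2 := by
            have := Set.ncard_le_ncard hAsub (Set.toFinite _)
            have h2' : ({x, b} : Set V).ncard = 2 := Set.ncard_pair hab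
            omega
          rcases hA with ⟨k, hk⟩; omega
        obtain ⟨x', hx'⟩ := Set.ncard_eq_one.mp hA1
        have : x' = x := by
          have hmem : x ∈ A := ha
          rw [hx'] at hmem
          exact hmem.symm
        subst this
        exact absurd (hx'.trans hx.symm) hAC
    · simp only [Set.mem_singleton_iff] at hxb
      subst hxb
      -- C = {b}
      by_cases h3 : ∃ b' ∈ B, b' ≠ a ∧ b' ≠ x
      · obtain ⟨b', hb', h1, h2'⟩ := h3
        exact ⟨a, ha, b', hb', x, by rw [hx]; rfl, fun h => h1 h.symm, hab, h2'⟩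
      · push_neg at h3
        have hBsub : B ⊆ {a, x} := by
          intro b' hb'
          rcases eq_or_ne b' a with rfl | h'
          · exact Set.mem_insert _ _
          · exact Set.mem_insert_of_mem _ (h3 b' hb' h')
        have hB1 : B.ncard = 1 := by
          have hle : B.ncard ≤ 2 := by
            have := Set.ncard_le_ncard hBsub (Set.toFinite _)
            have h2' : ({a, x} : Set V).ncard = 2 := Set.ncard_pair hab
            omega
          rcases hB with ⟨k, hk⟩; omega
        obtain ⟨x', hx'⟩ := Set.ncard_eq_one.mp hB1
        have : x' = x := by
          have hmem : x ∈ B := hb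
          rw [hx'] at hmem
          exact hmem.symm
        subst this
        exact absurd (hx'.trans hx.symm) hBC

end TriskelionAux

/-- Every nonempty irreducibly odd graph contains the triskelion
as a minor. -/
theorem irredOdd_triskelion_minor {V : Type*} [Fintype V] (G : SimpleGraph V)
    (hne : Nonempty V) (hG : IrredOdd G) : IsMinor Triskelion G := by
  classical
  obtain ⟨hOdd, hSep⟩ := hG
  have hQ : ∃ gg, ∃ ff, IsCyc G gg ff := exists_cyc hne hOdd hSep
  have hQ' : ∃ gg, ∃ ff, IsCyc G gg ff := hQ
  obtain ⟨g, hgmin, f, hc⟩ : ∃ g, (∀ g', g' < g → ∀ f', ¬ IsCyc G g' f') ∧ ∃ f, IsCyc G g f := by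
    obtain ⟨f0, h0⟩ := Nat.find_spec hQ
    refine ⟨Nat.find hQ, ?_, f0, h0⟩
    intro g' hg' f' hc'
    exact Nat.find_min hQ hg' ⟨f', hc'⟩
  classical
  obtain ⟨hg3, hadj, hinj⟩ := hc
  have hg1 : 1 < g := by omega
  have hmemS : ∀ i, i < g → f i ∈ f '' Set.Iio g := fun i hi => ⟨i, by simpa using hi, rfl⟩
  have hfneq : ∀ i j, i < g → j < g → i ≠ j → f i ≠ f j := by
    intro i j hi hj hij h
    exact hij (hinj (by simpa using hi) (by simpa using hj) h)
  have hsucc : ∀ a : ℕ, ((a % g) + 1) % g = (a + 1) % g := by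
    intro a
    conv_rhs => rw [Nat.add_mod]
    rw [Nat.mod_eq_of_lt (show 1 < g by omega)]
  -- chord-free
  have hchord : ∀ i j, i < j → j < g → G.Adj (f i) (f j) → j = i + 1 ∨ (i = 0 ∧ j = g - 1) := by
    intro i j hij hjg hA
    by_contra hcon
    push_neg at hcon
    obtain ⟨hne1, hne2⟩ := hcon
    have h2 : 2 ≤ j - i := by omega
    have h3 : j - i ≤ g - 2 := by
      rcases Nat.eq_zero_or_pos i with rfl | hipos
      · have := hne2 rfl; omega
      · omega
    refine hgmin (j - i + 1) (by omega) (fun k => f (i + k)) ⟨by omega, ?_, ?_⟩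
    · intro k hk
      show G.Adj (f (i + k)) (f (i + ((k+1) % (j-i+1))))
      rcases Nat.lt_or_ge k (j - i) with hk' | hk'
      · rw [Nat.mod_eq_of_lt (by omega)]
        have := hadj (i+k) (by omega)
        rw [Nat.mod_eq_of_lt (by omega)] at this
        have e : i + (k+1) = i + k + 1 := by omega
        rw [e]
        exact this
      · have hk2 : k = j - i := by omega
        subst hk2
        rw [Nat.mod_self, Nat.add_zero]
        have e : i + (j - i) = j := by omega
        rw [e]
        exact hA.symm
    · intro k1 h1 k2 h2' he
      simp only [Set.mem_Iio] at h1 h2'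
      have := hinj (show i+k1 ∈ Set.Iio g by simp only [Set.mem_Iio]; omega)
        (show i+k2 ∈ Set.Iio g by simp only [Set.mem_Iio]; omega) he
      omega
  -- characterisation of neighbours on the cycle
  have hnbrS : ∀ i, i < g → ∀ j, j < g → G.Adj (f i) (f j) →
      f j = f ((i+1) % g) ∨ f j = f ((i + (g-1)) % g) := by
    intro i hi j hj hA
    have hne : i ≠ j := fun h => G.irrefl (h ▸ hA)
    rcases Nat.lt_or_ge i j with h | h
    · rcases hchord i j h hj hA with rfl | ⟨rfl, rfl⟩
      · left; rw [Nat.mod_eq_of_lt (by omega)]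
      · right
        rw [Nat.zero_add, Nat.mod_eq_of_lt (by omega)]
    · have h' : j < i := by omega
      rcases hchord j i h' hi hA.symm with h2 | ⟨rfl, rfl⟩
      · right
        subst h2
        have e : j + 1 + (g-1) = j + g := by omega
        rw [e, Nat.add_mod_right, Nat.mod_eq_of_lt (by omega)]
      · left
        rw [show g - 1 + 1 = g from by omega, Nat.mod_self]
  -- the second cycle edge at each vertex
  have hedge2 : ∀ i, i < g → G.Adj (f i) (f ((i + (g-1)) % g)) := by
    intro i hi
    have hi' : (i + (g-1)) % g < g := Nat.mod_lt _ (by omega)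
    have h := hadj ((i + (g-1)) % g) hi'
    have e1 : ((i + (g-1)) % g + 1) % g = (i + (g-1) + 1) % g := hsucc _
    have e2 : i + (g-1) + 1 = i + g := by omega
    have e3 : (i + g) % g = i := by rw [Nat.add_mod_right, Nat.mod_eq_of_lt hi]
    rw [e1, e2, e3] at h
    exact h.symm
  -- the two cycle neighbours are distinct
  have hnp : ∀ i, i < g → (i+1) % g ≠ (i + (g-1)) % g := by
    intro i hi
    rcases Nat.eq_zero_or_pos i with rfl | hipos
    · rw [Nat.zero_add, Nat.zero_add, Nat.mod_eq_of_lt (by omega), Nat.mod_eq_of_lt (by omega)]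
      omega
    · rcases Nat.lt_or_ge (i+1) g with h | h
      · rw [Nat.mod_eq_of_lt h]
        have e : i + (g-1) = (i-1) + g := by omega
        rw [e, Nat.add_mod_right, Nat.mod_eq_of_lt (by omega)]
        omega
      · have hieq : i = g - 1 := by omega
        subst hieq
        rw [show g - 1 + 1 = g from by omega, Nat.mod_self]
        have e : g - 1 + (g-1) = (g-2) + g := by omega
        rw [e, Nat.add_mod_right, Nat.mod_eq_of_lt (by omega)]
        omega
  -- neighbourhood decomposition
  have hNeq : ∀ i, i < g → G.neighborSet (f i) =
      ({f ((i+1) % g), f ((i + (g-1)) % g)} : Set V) ∪ (G.neighborSet (f i) \ f '' Set.Iio g) := by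
    intro i hi
    ext u
    constructor
    · intro hu
      by_cases hus : u ∈ f '' Set.Iio g
      · obtain ⟨j, hj, rfl⟩ := hus
        simp only [Set.mem_Iio] at hj
        rcases hnbrS i hi j hj hu with h | h
        · exact Or.inl (Or.inl h)
        · exact Or.inl (Or.inr h)
      · exact Or.inr ⟨hu, hus⟩
    · intro hu
      rcases hu with (rfl | rfl) | hu
      · exact hadj i hi
      · exact hedge2 i hi
      · exact hu.1
  have hOodd : ∀ i, i < g → Odd (G.neighborSet (f i) \ f '' Set.Iio g).ncard := by
    intro i hi
    have hodd := hOdd (f i)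
    rw [hNeq i hi] at hodd
    have hd : Disjoint ({f ((i+1) % g), f ((i + (g-1)) % g)} : Set V)
        (G.neighborSet (f i) \ f '' Set.Iio g) := by
      rw [Set.disjoint_left]
      rintro x (rfl | rfl) hx
      · exact hx.2 (hmemS _ (Nat.mod_lt _ (by omega)))
      · exact hx.2 (hmemS _ (Nat.mod_lt _ (by omega)))
    rw [Set.ncard_union_eq hd (Set.toFinite _) (Set.toFinite _)] at hodd
    have hp : ({f ((i+1) % g), f ((i + (g-1)) % g)} : Set V).ncard = 2 :=
      Set.ncard_pair (hfneq _ _ (Nat.mod_lt _ (by omega)) (Nat.mod_lt _ (by omega)) (hnp i hi))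
    rw [hp] at hodd
    rcases hodd with ⟨k, hk⟩
    exact ⟨k - 1, by omega⟩
  have hOnon : ∀ i, i < g → (G.neighborSet (f i) \ f '' Set.Iio g).Nonempty := by
    intro i hi
    have := hOodd i hi
    rcases this with ⟨k, hk⟩
    exact (Set.ncard_pos (Set.toFinite _)).mp (by omega)
  -- outside vertices adjacent to two cycle vertices
  have houts : ∀ y, y ∉ f '' Set.Iio g → ∀ i j, i < j → j < g →
      G.Adj (f i) y → G.Adj (f j) y → j - i ≤ 2 ∧ g - 2 ≤ j - i := by
    intro y hyS i j hij hjg hyi hyj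
    have hig : i < g := by omega
    constructor
    · by_contra hcc
      push_neg at hcc   -- 2 < j - i
      refine hgmin (g - (j-i) + 2) (by omega)
        (fun k => if k = g - (j-i) + 1 then y else f ((j + k) % g)) ⟨by omega, ?_, ?_⟩
      · intro k hk
        show G.Adj (if k = g - (j-i) + 1 then y else f ((j + k) % g))
          (if (k+1) % (g - (j-i) + 2) = g - (j-i) + 1 then y
            else f ((j + ((k+1) % (g - (j-i) + 2))) % g))
        rcases Nat.lt_or_ge k (g - (j-i)) with hk' | hk'
        · rw [if_neg (show ¬ k = g - (j-i) + 1 by omega),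
            Nat.mod_eq_of_lt (show k+1 < g - (j-i) + 2 by omega),
            if_neg (show ¬ k+1 = g - (j-i) + 1 by omega)]
          have h := hadj ((j+k) % g) (Nat.mod_lt _ (by omega))
          rw [hsucc] at h
          have e : j + (k+1) = j + k + 1 := by omega
          rw [e]
          exact h
        · rcases Nat.lt_or_ge k (g - (j-i) + 1) with hk2 | hk2
          · have hke : k = g - (j-i) := by omega
            subst hke
            rw [if_neg (show ¬ g - (j-i) = g - (j-i) + 1 by omega),
              Nat.mod_eq_of_lt (show g - (j-i) + 1 < g - (j-i) + 2 by omega), if_pos rfl]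
            have e : j + (g - (j-i)) = i + g := by omega
            rw [e, Nat.add_mod_right, Nat.mod_eq_of_lt hig]
            exact hyi
          · have hke : k = g - (j-i) + 1 := by omega
            subst hke
            rw [if_pos rfl, show (g - (j-i) + 1 + 1) % (g - (j-i) + 2) = 0 from by
              rw [show g - (j-i) + 1 + 1 = g - (j-i) + 2 from by omega, Nat.mod_self]]
            rw [if_neg (show ¬ (0:ℕ) = g - (j-i) + 1 by omega), Nat.add_zero,
              Nat.mod_eq_of_lt hjg]
            exact hyj.symm
      · intro k1 h1 k2 h2 he
        simp only [Set.mem_Iio] at h1 h2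
        have he' : (if k1 = g - (j-i) + 1 then y else f ((j + k1) % g)) =
            (if k2 = g - (j-i) + 1 then y else f ((j + k2) % g)) := he
        by_cases e1 : k1 = g - (j-i) + 1 <;> by_cases e2 : k2 = g - (j-i) + 1
        · omega
        · rw [if_pos e1, if_neg e2] at he'
          exact absurd (he' ▸ hmemS ((j+k2) % g) (Nat.mod_lt _ (by omega))) hyS
        · rw [if_neg e1, if_pos e2] at he'
          exact absurd (he'.symm ▸ hmemS ((j+k1) % g) (Nat.mod_lt _ (by omega))) hyS
        · rw [if_neg e1, if_neg e2] at he'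
          replace he := he'
          have hmods := hinj (show (j+k1) % g ∈ Set.Iio g by
              simp only [Set.mem_Iio]; exact Nat.mod_lt _ (by omega))
            (show (j+k2) % g ∈ Set.Iio g by
              simp only [Set.mem_Iio]; exact Nat.mod_lt _ (by omega)) he
          rcases le_total k1 k2 with h | h
          · have hdvd : g ∣ (j + k2) - (j + k1) :=
              (Nat.modEq_iff_dvd' (by omega)).mp hmods
            have heq : (j + k2) - (j + k1) = k2 - k1 := by omega
            rw [heq] at hdvd
            rcases Nat.eq_zero_or_pos (k2 - k1) with h0 | h0
            · omega
            · have := Nat.le_of_dvd h0 hdvd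
              omega
          · have hdvd : g ∣ (j + k1) - (j + k2) :=
              (Nat.modEq_iff_dvd' (by omega)).mp hmods.symm
            have heq : (j + k1) - (j + k2) = k1 - k2 := by omega
            rw [heq] at hdvd
            rcases Nat.eq_zero_or_pos (k1 - k2) with h0 | h0
            · omega
            · have := Nat.le_of_dvd h0 hdvd
              omega
    · by_contra hcc
      push_neg at hcc   -- j - i < g - 2
      refine hgmin (j - i + 2) (by omega)
        (fun k => if k = j - i + 1 then y else f (i + k)) ⟨by omega, ?_, ?_⟩
      · intro k hk
        show G.Adj (if k = j - i + 1 then y else f (i + k))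
          (if (k+1) % (j - i + 2) = j - i + 1 then y else f (i + ((k+1) % (j - i + 2))))
        rcases Nat.lt_or_ge k (j - i) with hk' | hk'
        · rw [if_neg (show ¬ k = j - i + 1 by omega),
            Nat.mod_eq_of_lt (show k+1 < j - i + 2 by omega),
            if_neg (show ¬ k+1 = j - i + 1 by omega)]
          have h := hadj (i+k) (by omega)
          rw [Nat.mod_eq_of_lt (by omega)] at h
          have e : i + (k+1) = i + k + 1 := by omega
          rw [e]
          exact h
        · rcases Nat.lt_or_ge k (j - i + 1) with hk2 | hk2
          · have hke : k = j - i := by omega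
            subst hke
            rw [if_neg (show ¬ j - i = j - i + 1 by omega),
              Nat.mod_eq_of_lt (show j - i + 1 < j - i + 2 by omega), if_pos rfl]
            have e : i + (j - i) = j := by omega
            rw [e]
            exact hyj
          · have hke : k = j - i + 1 := by omega
            subst hke
            rw [if_pos rfl, show (j - i + 1 + 1) % (j - i + 2) = 0 from by
              rw [show j - i + 1 + 1 = j - i + 2 from by omega, Nat.mod_self]]
            rw [if_neg (show ¬ (0:ℕ) = j - i + 1 by omega), Nat.add_zero]
            exact hyi.symm
      · intro k1 h1 k2 h2 he
        simp only [Set.mem_Iio] at h1 h2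
        have he' : (if k1 = j - i + 1 then y else f (i + k1)) =
            (if k2 = j - i + 1 then y else f (i + k2)) := he
        by_cases e1 : k1 = j - i + 1 <;> by_cases e2 : k2 = j - i + 1
        · omega
        · rw [if_pos e1, if_neg e2] at he'
          exact absurd (he' ▸ hmemS (i + k2) (by omega)) hyS
        · rw [if_neg e1, if_pos e2] at he'
          exact absurd (he'.symm ▸ hmemS (i + k1) (by omega)) hyS
        · rw [if_neg e1, if_neg e2] at he'
          have := hinj (show i+k1 ∈ Set.Iio g by simp only [Set.mem_Iio]; omega)
            (show i+k2 ∈ Set.Iio g by simp only [Set.mem_Iio]; omega) he'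
          omega
  -- find three distinct legs
  have hfin : ∃ y0 ∈ G.neighborSet (f 0) \ f '' Set.Iio g,
      ∃ y1 ∈ G.neighborSet (f 1) \ f '' Set.Iio g,
      ∃ y2 ∈ G.neighborSet (f 2) \ f '' Set.Iio g, y0 ≠ y1 ∧ y0 ≠ y2 ∧ y1 ≠ y2 := by
    rcases (show g = 3 ∨ g = 4 ∨ 5 ≤ g by omega) with hg | hg | hg
    · -- g = 3
      subst hg
      have h01 : G.Adj (f 0) (f 1) := by
        have h := hadj 0 (by omega); rwa [show (0+1)%3 = 1 by norm_num] at h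
      have h12 : G.Adj (f 1) (f 2) := by
        have h := hadj 1 (by omega); rwa [show (1+1)%3 = 2 by norm_num] at h
      have h20 : G.Adj (f 2) (f 0) := by
        have h := hadj 2 (by omega); rwa [show (2+1)%3 = 0 by norm_num] at h
      have hall : ∀ a b, a < 3 → b < 3 → a ≠ b → G.Adj (f a) (f b) := by
        intro a b ha hb hab
        interval_cases a <;> interval_cases b <;>
          first
          | exact absurd rfl hab
          | exact h01
          | exact h12
          | exact h20
          | exact h01.symm
          | exact h12.symm
          | exact h20.symm
      have htwin : ∀ i j, i < 3 → j < 3 → i ≠ j →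
          (G.neighborSet (f i) \ f '' Set.Iio 3) ≠ (G.neighborSet (f j) \ f '' Set.Iio 3) := by
        intro i j hi3 hj3 hijne hEq
        apply no_twins hSep (hfneq i j (by omega) (by omega) hijne)
        intro w hwi hwj
        constructor
        · intro hA
          by_cases hws : w ∈ f '' Set.Iio 3
          · obtain ⟨m, hm, rfl⟩ := hws
            simp only [Set.mem_Iio] at hm
            have hmj : m ≠ j := fun h => hwj (by rw [h])
            exact hall m j hm hj3 hmj
          · have hmem : w ∈ G.neighborSet (f i) \ f '' Set.Iio 3 := ⟨hA.symm, hws⟩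
            rw [hEq] at hmem
            exact hmem.1.symm
        · intro hA
          by_cases hws : w ∈ f '' Set.Iio 3
          · obtain ⟨m, hm, rfl⟩ := hws
            simp only [Set.mem_Iio] at hm
            have hmi : m ≠ i := fun h => hwi (by rw [h])
            exact hall m i hm hi3 hmi
          · have hmem : w ∈ G.neighborSet (f j) \ f '' Set.Iio 3 := ⟨hA.symm, hws⟩
            rw [← hEq] at hmem
            exact hmem.1.symm
      exact sdr3 (hOodd 0 (by omega)) (hOodd 1 (by omega)) (hOodd 2 (by omega))
        (htwin 0 1 (by omega) (by omega) (by omega))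
        (htwin 0 2 (by omega) (by omega) (by omega))
        (htwin 1 2 (by omega) (by omega) (by omega))
    · -- g = 4
      subst hg
      obtain ⟨y1, hy1⟩ := hOnon 1 (by omega)
      by_cases hex : ∃ a ∈ G.neighborSet (f 0) \ f '' Set.Iio 4,
          ∃ c ∈ G.neighborSet (f 2) \ f '' Set.Iio 4, a ≠ c
      · obtain ⟨a, haO, c, hcO, hac⟩ := hex
        have hay1 : a ≠ y1 := by
          intro h
          subst h
          have := houts a haO.2 0 1 (by omega) (by omega) haO.1 hy1.1
          omega
        have hcy1 : c ≠ y1 := by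
          intro h
          subst h
          have := houts c hcO.2 1 2 (by omega) (by omega) hy1.1 hcO.1
          omega
        exact ⟨a, haO, y1, hy1, c, hcO, hay1, hac, fun h => hcy1 h.symm⟩
      · push_neg at hex
        obtain ⟨a0, ha0⟩ := hOnon 0 (by omega)
        obtain ⟨c0, hc0⟩ := hOnon 2 (by omega)
        exfalso
        have heq02 : (G.neighborSet (f 0) \ f '' Set.Iio 4) =
            (G.neighborSet (f 2) \ f '' Set.Iio 4) := by
          ext x
          constructor
          · intro hx
            have hxc := hex x hx c0 hc0
            rw [hxc]
            exact hc0
          · intro hx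
            have hxc := hex a0 ha0 x hx
            rw [← hxc]
            exact ha0
        have h01 : G.Adj (f 0) (f 1) := by
          have h := hadj 0 (by omega); rwa [show (0+1)%4 = 1 by norm_num] at h
        have h12 : G.Adj (f 1) (f 2) := by
          have h := hadj 1 (by omega); rwa [show (1+1)%4 = 2 by norm_num] at h
        have h23 : G.Adj (f 2) (f 3) := by
          have h := hadj 2 (by omega); rwa [show (2+1)%4 = 3 by norm_num] at h
        have h30 : G.Adj (f 3) (f 0) := by
          have h := hadj 3 (by omega); rwa [show (3+1)%4 = 0 by norm_num] at h
        apply no_twins hSep (hfneq 0 2 (by omega) (by omega) (by omega))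
        intro w hw0 hw2
        constructor
        · intro hA
          by_cases hws : w ∈ f '' Set.Iio 4
          · obtain ⟨m, hm, rfl⟩ := hws
            simp only [Set.mem_Iio] at hm
            rcases hnbrS 0 (by omega) m hm hA.symm with h | h
            · rw [show (0+1)%4 = 1 by norm_num] at h
              rw [h]
              exact h12
            · rw [show (0+(4-1))%4 = 3 by norm_num] at h
              rw [h]
              exact h23.symm
          · have hmem : w ∈ G.neighborSet (f 0) \ f '' Set.Iio 4 := ⟨hA.symm, hws⟩
            rw [heq02] at hmem
            exact hmem.1.symm
        · intro hA
          by_cases hws : w ∈ f '' Set.Iio 4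
          · obtain ⟨m, hm, rfl⟩ := hws
            simp only [Set.mem_Iio] at hm
            rcases hnbrS 2 (by omega) m hm hA.symm with h | h
            · rw [show (2+1)%4 = 3 by norm_num] at h
              rw [h]
              exact h30
            · rw [show (2+(4-1))%4 = 1 by norm_num] at h
              rw [h]
              exact h01.symm
          · have hmem : w ∈ G.neighborSet (f 2) \ f '' Set.Iio 4 := ⟨hA.symm, hws⟩
            rw [← heq02] at hmem
            exact hmem.1.symm
    · -- 5 ≤ g
      obtain ⟨y0, hy0⟩ := hOnon 0 (by omega)
      obtain ⟨y1, hy1⟩ := hOnon 1 (by omega)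
      obtain ⟨y2, hy2⟩ := hOnon 2 (by omega)
      have d01 : y0 ≠ y1 := by
        intro h
        subst h
        have := houts y0 hy0.2 0 1 (by omega) (by omega) hy0.1 hy1.1
        omega
      have d02 : y0 ≠ y2 := by
        intro h
        subst h
        have := houts y0 hy0.2 0 2 (by omega) (by omega) hy0.1 hy2.1
        omega
      have d12 : y1 ≠ y2 := by
        intro h
        subst h
        have := houts y1 hy1.2 1 2 (by omega) (by omega) hy1.1 hy2.1
        omega
      exact ⟨y0, hy0, y1, hy1, y2, hy2, d01, d02, d12⟩
  obtain ⟨y0, hy0, y1, hy1, y2, hy2, d01, d02, d12⟩ := hfin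
  exact minor_of_cyc_legs ⟨hg3, hadj, hinj⟩ hy0.2 hy1.2 hy2.2 d01 d02 d12 hy0.1 hy1.1 hy2.1
end

section
/- Every irreducibly odd graph on 2k vertices (k ≥ 1) has at least 2k edges. -/
open Finset


/-- Every irreducibly odd graph on 2k vertices (k ≥ 1) has at
least 2k edges. -/
theorem irredOdd_edge_lower_bound {V : Type*} [Fintype V] (G : SimpleGraph V)
    (hG : IrredOdd G) (k : ℕ) (hk : 1 ≤ k) (hcard : Fintype.card V = 2 * k) :
    2 * k ≤ G.edgeSet.ncard := by
  classical
  have hdeg : ∀ v, Odd (G.degree v) := by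
    intro v
    have h := hG.1 v
    rwa [Set.ncard_eq_toFinset_card', Set.toFinset_card,
      SimpleGraph.card_neighborSet_eq_degree] at h
  -- unique neighbor for degree-1 vertices
  have huniq : ∀ v, G.degree v = 1 → ∃ u, ∀ w, G.Adj v w ↔ w = u := by
    intro v hv
    obtain ⟨a, ha⟩ := Finset.card_eq_one.mp hv
    refine ⟨a, fun w => ?_⟩
    rw [← SimpleGraph.mem_neighborFinset, ha, Finset.mem_singleton]
  set D1 : Finset V := univ.filter (fun v => G.degree v = 1) with hD1
  set f : V → V := fun v => if h : ∃ u, ∀ w, G.Adj v w ↔ w = u then h.choose else v with hf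
  have hfspec : ∀ v ∈ D1, ∀ w, G.Adj v w ↔ w = f v := by
    intro v hv
    have hd : G.degree v = 1 := (Finset.mem_filter.mp hv).2
    have h := huniq v hd
    simp only [hf, dif_pos h]
    exact h.choose_spec
  have hmaps : ∀ v ∈ D1, f v ∈ univ \ D1 := by
    intro v hv
    refine Finset.mem_sdiff.mpr ⟨Finset.mem_univ _, fun hfv => ?_⟩
    -- f v has degree 1; isolated edge contradiction
    have hadj : G.Adj v (f v) := (hfspec v hv (f v)).mpr rfl
    have hadj' : G.Adj (f v) v := hadj.symm
    have hspec' := hfspec (f v) hfv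
    have hvv : v = f (f v) := (hspec' v).mp hadj'
    have hne : v ≠ f v := G.ne_of_adj hadj
    obtain ⟨w, hwu, hwv, hxor⟩ := hG.2 v (f v) hne
    rcases hxor with ⟨h1, _⟩ | ⟨h1, _⟩
    · exact hwv ((hfspec v hv w).mp h1.symm ▸ rfl)
    · have := (hspec' w).mp h1.symm
      rw [← hvv] at this
      exact hwu this
  have hinj : Set.InjOn f D1 := by
    intro a ha b hb hab
    by_contra hne
    obtain ⟨w, hwu, hwv, hxor⟩ := hG.2 a b hne
    have h1 : G.Adj w a ↔ w = f a := by rw [← (hfspec a ha w)]; exact ⟨fun h => h.symm, fun h => h.symm⟩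
    have h2 : G.Adj w b ↔ w = f b := by rw [← (hfspec b hb w)]; exact ⟨fun h => h.symm, fun h => h.symm⟩
    rw [hab] at h1
    rcases hxor with ⟨p1, p2⟩ | ⟨p1, p2⟩
    · exact p2 (h2.mpr (h1.mp p1))
    · exact p2 (h1.mpr (h2.mp p1))
  have hcard1 : D1.card ≤ (univ \ D1).card :=
    Finset.card_le_card_of_injOn f hmaps hinj
  have hcompl : (univ \ D1).card = 2 * k - D1.card := by
    rw [Finset.card_sdiff_of_subset (Finset.subset_univ _), Finset.card_univ, hcard]
  have hD1k : D1.card ≤ k := by omega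
  have hdle : D1.card ≤ 2 * k := hcard ▸ (Finset.card_univ (α := V)) ▸ Finset.card_le_card (Finset.subset_univ _)
  -- sum of degrees
  have hsum : 4 * k ≤ ∑ v, G.degree v := by
    have hsplit : ∑ v ∈ univ \ D1, G.degree v + ∑ v ∈ D1, G.degree v = ∑ v, G.degree v :=
      Finset.sum_sdiff (Finset.subset_univ D1)
    have hs1 : ∑ v ∈ D1, G.degree v = D1.card := by
      rw [Finset.card_eq_sum_ones]
      exact Finset.sum_congr rfl (fun v hv => (Finset.mem_filter.mp hv).2)
    have hs2 : (univ \ D1).card * 3 ≤ ∑ v ∈ univ \ D1, G.degree v := by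
      have h3 : ∀ v ∈ univ \ D1, 3 ≤ G.degree v := by
        intro v hv
        have hne1 : G.degree v ≠ 1 := by
          intro h1
          exact (Finset.mem_sdiff.mp hv).2 (Finset.mem_filter.mpr ⟨Finset.mem_univ _, h1⟩)
        obtain ⟨m, hm⟩ := hdeg v
        omega
      calc (univ \ D1).card * 3 = ∑ _v ∈ univ \ D1, 3 := by
            rw [Finset.sum_const, smul_eq_mul]
          _ ≤ ∑ v ∈ univ \ D1, G.degree v := Finset.sum_le_sum h3
    omega
  have htwice := G.sum_degrees_eq_twice_card_edges
  have hedge : G.edgeSet.ncard = G.edgeFinset.card := by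
    rw [Set.ncard_eq_toFinset_card']
    congr 1
  omega
end

section
/- Every irreducibly odd graph on 2k vertices has at most C(2k,2) - 2k + 1 edges. -/
/-- Every irreducibly odd graph on 2k vertices has at most
C(2k,2) - 2k + 1 edges. -/
theorem irredOdd_edge_upper_bound {V : Type*} [Fintype V] (G : SimpleGraph V)
    (hG : IrredOdd G) (k : ℕ) (hcard : Fintype.card V = 2 * k) :
    G.edgeSet.ncard ≤ Nat.choose (2 * k) 2 - 2 * k + 1 := by
  classical
  obtain ⟨hodd, hirr⟩ := hG
  -- degrees are odd
  have hdeg : ∀ v : V, Odd (G.degree v) := by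
    intro v
    have h := hodd v
    rwa [Set.ncard_eq_toFinset_card', Set.toFinset_card,
      G.card_neighborSet_eq_degree] at h
  -- complement degree formula
  have hcompl : ∀ v : V, Gᶜ.degree v = 2 * k - 1 - G.degree v := by
    intro v
    rw [SimpleGraph.degree_compl, hcard]
  have hlt : ∀ v : V, G.degree v < 2 * k := by
    intro v
    have := G.degree_lt_card_verts v
    omega
  -- complement degrees are even
  have heven : ∀ v : V, Even (Gᶜ.degree v) := by
    intro v
    obtain ⟨c, hc⟩ := hdeg v
    have h1 := hcompl v
    have h2 := hlt v
    exact ⟨k - 1 - c, by omega⟩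
  -- the set of vertices with complement degree 0
  set S : Finset V := Finset.univ.filter (fun v => Gᶜ.degree v = 0) with hS
  have hadj_all : ∀ u ∈ S, ∀ w : V, w ≠ u → G.Adj w u := by
    intro u hu w hw
    have hdu : Gᶜ.degree u = 0 := by
      simpa [hS] using hu
    have hnotadj : ¬ Gᶜ.Adj u w := by
      intro h
      have : w ∈ Gᶜ.neighborFinset u := (SimpleGraph.mem_neighborFinset _ _ _).2 h
      have : 0 < Gᶜ.degree u := Finset.card_pos.2 ⟨w, this⟩
      omega
    rw [SimpleGraph.compl_adj] at hnotadj
    push_neg at hnotadj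
    exact (hnotadj (fun h => hw h.symm)).symm
  have hScard : S.card ≤ 1 := by
    by_contra h
    push_neg at h
    obtain ⟨u, hu, v, hv, huv⟩ := Finset.one_lt_card.1 h
    obtain ⟨w, hwu, hwv, hxor⟩ := hirr u v huv
    have h1 : G.Adj w u := hadj_all u hu w hwu
    have h2 : G.Adj w v := hadj_all v hv w hwv
    rcases hxor with ⟨_, h⟩ | ⟨_, h⟩ <;> exact h ‹_›
  have hge2 : ∀ v ∈ Finset.univ \ S, 2 ≤ Gᶜ.degree v := by
    intro v hv
    have hne : Gᶜ.degree v ≠ 0 := by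
      simp only [Finset.mem_sdiff, hS, Finset.mem_filter, Finset.mem_univ,
        true_and] at hv
      exact hv
    obtain ⟨c, hc⟩ := heven v
    omega
  -- sum of complement degrees
  have hsum : ∑ v : V, Gᶜ.degree v = 2 * Gᶜ.edgeFinset.card :=
    Gᶜ.sum_degrees_eq_twice_card_edges
  have hlb : 2 * (2 * k - 1) ≤ ∑ v : V, Gᶜ.degree v := by
    have h1 : ∑ v ∈ Finset.univ \ S, (2 : ℕ) ≤ ∑ v ∈ Finset.univ \ S, Gᶜ.degree v :=
      Finset.sum_le_sum hge2
    have h2 : ∑ v ∈ Finset.univ \ S, Gᶜ.degree v ≤ ∑ v : V, Gᶜ.degree v :=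
      Finset.sum_le_sum_of_subset (Finset.sdiff_subset)
    have h3 : (Finset.univ \ S).card = 2 * k - S.card := by
      rw [Finset.card_sdiff_of_subset (Finset.subset_univ _), Finset.card_univ, hcard]
    have h4 : ∑ v ∈ Finset.univ \ S, (2 : ℕ) = 2 * (2 * k - S.card) := by
      rw [Finset.sum_const, h3, smul_eq_mul, Nat.mul_comm]
    omega
  have hcompl_edges : 2 * k - 1 ≤ Gᶜ.edgeFinset.card := by omega
  -- edges of G plus edges of complement = choose
  have hsplit : G.edgeFinset.card + Gᶜ.edgeFinset.card = Nat.choose (2 * k) 2 := by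
    have hdisj : Disjoint G.edgeFinset Gᶜ.edgeFinset :=
      SimpleGraph.disjoint_edgeFinset.2 disjoint_compl_right
    have htop : G ⊔ Gᶜ = ⊤ := sup_compl_eq_top
    have hunion : G.edgeFinset ∪ Gᶜ.edgeFinset = (⊤ : SimpleGraph V).edgeFinset := by
      rw [← SimpleGraph.edgeFinset_sup]
      exact SimpleGraph.edgeFinset_inj.2 htop
    rw [← Finset.card_union_of_disjoint hdisj, hunion,
      SimpleGraph.card_edgeFinset_top_eq_card_choose_two, hcard]
  have hncard : G.edgeSet.ncard = G.edgeFinset.card := by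
    rw [Set.ncard_eq_toFinset_card', Set.toFinset_card, SimpleGraph.edgeFinset_card]
  omega
end

section
/- At most half of the vertices of an irreducibly odd graph have degree 1, and every other vertex has degree at least 3. -/
/-- At most half of the vertices of an irreducibly odd graph have
degree 1, and every other vertex has degree at least 3. -/
theorem irredOdd_degree_structure {V : Type*} [Fintype V] (G : SimpleGraph V)
    (hG : IrredOdd G) :
    2 * {v : V | (G.neighborSet v).ncard = 1}.ncard ≤ Fintype.card V ∧
    ∀ v : V, (G.neighborSet v).ncard ≠ 1 → 3 ≤ (G.neighborSet v).ncard := by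
  obtain ⟨hodd, hsep⟩ := hG
  set S := {v : V | (G.neighborSet v).ncard = 1} with hS
  have hchoose : ∀ v : V, ∃ w : V, (G.neighborSet v).ncard = 1 → G.neighborSet v = {w} := by
    intro v
    by_cases h : (G.neighborSet v).ncard = 1
    · obtain ⟨w, hw⟩ := Set.ncard_eq_one.mp h
      exact ⟨w, fun _ => hw⟩
    · exact ⟨v, fun h' => absurd h' h⟩
  choose f hf using hchoose
  have hmem : ∀ v ∈ S, ∀ x : V, G.Adj v x ↔ x = f v := by
    intro v hv x
    have := hf v hv
    constructor
    · intro hx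
      have : x ∈ G.neighborSet v := hx
      rw [hf v hv] at this
      exact this
    · intro hx
      subst hx
      have : f v ∈ G.neighborSet v := by rw [hf v hv]; rfl
      exact this
  refine ⟨?_, ?_⟩
  · -- first part
    have hmaps : ∀ v ∈ S, f v ∈ Sᶜ := by
      intro v hv
      intro hfv
      have hadj : G.Adj v (f v) := (hmem v hv (f v)).mpr rfl
      have hne : v ≠ f v := G.ne_of_adj hadj
      have hfw : f (f v) = v := by
        have : G.Adj (f v) v := hadj.symm
        exact ((hmem (f v) hfv v).mp this).symm
      obtain ⟨x, hxv, hxfv, hxor⟩ := hsep v (f v) hne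
      have h1 : ¬ G.Adj x v := by
        intro h
        exact hxfv ((hmem v hv x).mp h.symm)
      have h2 : ¬ G.Adj x (f v) := by
        intro h
        have := (hmem (f v) hfv x).mp h.symm
        rw [hfw] at this
        exact hxv this
      rcases hxor with ⟨h, _⟩ | ⟨h, _⟩
      · exact h1 h
      · exact h2 h
    have hinj : Set.InjOn f S := by
      intro u hu v hv huv
      by_contra hne
      obtain ⟨x, hxu, hxv, hxor⟩ := hsep u v hne
      have e1 : G.Adj x u ↔ x = f u := by
        rw [← (hmem u hu x)]
        exact ⟨SimpleGraph.Adj.symm, SimpleGraph.Adj.symm⟩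
      have e2 : G.Adj x v ↔ x = f v := by
        rw [← (hmem v hv x)]
        exact ⟨SimpleGraph.Adj.symm, SimpleGraph.Adj.symm⟩
      rw [huv] at e1
      rcases hxor with ⟨h, h'⟩ | ⟨h, h'⟩
      · exact h' (e2.mpr (e1.mp h))
      · exact h' (e1.mpr (e2.mp h))
    have hle : S.ncard ≤ Sᶜ.ncard :=
      Set.ncard_le_ncard_of_injOn f hmaps hinj (Set.toFinite _)
    have hsum : S.ncard + Sᶜ.ncard = Fintype.card V := by
      rw [← Nat.card_eq_fintype_card]
      exact Set.ncard_add_ncard_compl S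
    omega
  · intro v hv
    obtain ⟨k, hk⟩ := hodd v
    omega
end

section
/- If G is a finite irreducibly even graph with an even number of vertices, then the complement of G is irreducibly odd; if G is irreducibly even with an odd number of vertices, then the complement of G is irreducibly even. -/
/-- A graph is irreducibly even if every vertex has even degree and for every pair
of distinct vertices `u, v` there is a third vertex adjacent to exactly one of them. -/
def IrredEven {V : Type*} (G : SimpleGraph V) : Prop :=
  (∀ v : V, Even (G.neighborSet v).ncard) ∧
  ∀ u v : V, u ≠ v → ∃ w : V, w ≠ u ∧ w ≠ v ∧ Xor' (G.Adj w u) (G.Adj w v)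

/-- The complement of an irreducibly even graph on an even number of
vertices is irreducibly odd; on an odd number of vertices it is irreducibly even. -/
theorem irredEven_compl {V : Type*} [Fintype V] (G : SimpleGraph V)
    (hG : IrredEven G) :
    (Even (Fintype.card V) → IrredOdd Gᶜ) ∧
    (Odd (Fintype.card V) → IrredEven Gᶜ) := by
  classical
  obtain ⟨hdeg, hsep⟩ := hG
  have hsep' : ∀ u v : V, u ≠ v → ∃ w : V, w ≠ u ∧ w ≠ v ∧
      Xor' (Gᶜ.Adj w u) (Gᶜ.Adj w v) := by
    intro u v huv
    obtain ⟨w, hwu, hwv, hx⟩ := hsep u v huv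
    refine ⟨w, hwu, hwv, ?_⟩
    simp only [Xor', Xor, SimpleGraph.compl_adj] at hx ⊢
    tauto
  have ncd : ∀ (H : SimpleGraph V) (v : V) [Fintype (H.neighborSet v)],
      (H.neighborSet v).ncard = H.degree v := by
    intro H v _
    rw [← SimpleGraph.card_neighborSet_eq_degree, ← Nat.card_eq_fintype_card,
      Nat.card_coe_set_eq]
  have key : ∀ v : V, (Gᶜ.neighborSet v).ncard = Fintype.card V - 1 - (G.neighborSet v).ncard := by
    intro v
    rw [ncd Gᶜ v, ncd G v]
    exact SimpleGraph.degree_compl G v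
  have hlt : ∀ v : V, (G.neighborSet v).ncard < Fintype.card V := by
    intro v
    rw [ncd G v]
    exact SimpleGraph.degree_lt_card_verts (G := G) v
  constructor
  · intro hcard
    refine ⟨fun v => ?_, hsep'⟩
    rw [key v, Nat.odd_iff]
    have h1 := (Nat.even_iff).mp hcard
    have h2 := (Nat.even_iff).mp (hdeg v)
    have h3 := hlt v
    omega
  · intro hcard
    refine ⟨fun v => ?_, hsep'⟩
    rw [key v, Nat.even_iff]
    have h1 := (Nat.odd_iff).mp hcard
    have h2 := (Nat.even_iff).mp (hdeg v)
    have h3 := hlt v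
    omega
end
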